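/- arXiv:2405.13253 — 3 statements merged into one kernel-verified Lean document; each statement's English description precedes it below -/
import Mathlib

section
/- Suppose f is a holomorphic function on the open unit disc B_1 ⊂ ℂ with |f(0)| = 1 and sup_{B_1} |f| ≤ 2^N for some N ≥ 0. Then there exists a universal constant C₁ > 0 (independent of f and N) such that the number of zeros of f in the disc B_{1/2} of radius 1/2 satisfies #{z ∈ B_{1/2} : f(z) = 0} ≤ C₁·N, where zeros are counted with multiplicity. -/
open MeasureTheory Metric Set Real

noncomputable section

/-- The vanishing order (multiplicity) of `f` at `z`: the least `k` such that the
`k`-th derivative of `f` at `z` does not vanish (junk value `0` if no such `k`). -/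
def vanishingOrder (f : ℂ → ℂ) (z : ℂ) : ℕ :=
  sInf {k : ℕ | iteratedDeriv k f z ≠ 0}


namespace ZeroCount
open Filter Function

lemma iteratedDeriv_eq_coeff {f : ℂ → ℂ} {p : FormalMultilinearSeries ℂ ℂ ℂ} {z₀ : ℂ}
    (hp : HasFPowerSeriesAt f p z₀) (k : ℕ) :
    iteratedDeriv k f z₀ = Nat.factorial k • p.coeff k := by
  obtain ⟨r, hr⟩ := hp
  rw [iteratedDeriv_eq_iteratedFDeriv]
  exact (hr.factorial_smul (1 : ℂ) k).symm

lemma vanishingOrder_eq_series_order {f : ℂ → ℂ} {p : FormalMultilinearSeries ℂ ℂ ℂ} {z₀ : ℂ}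
    (hp : HasFPowerSeriesAt f p z₀) :
    vanishingOrder f z₀ = p.order := by
  unfold vanishingOrder FormalMultilinearSeries.order
  congr 1
  ext k
  have hk : iteratedDeriv k f z₀ = (Nat.factorial k : ℂ) * p.coeff k := by
    rw [iteratedDeriv_eq_coeff hp, nsmul_eq_mul]
  simp only [mem_setOf_eq, hk, ne_eq, mul_eq_zero, Nat.cast_eq_zero, Nat.factorial_ne_zero,
    false_or, FormalMultilinearSeries.coeff_eq_zero]

lemma analyticAt_order_eq {f : ℂ → ℂ} {p : FormalMultilinearSeries ℂ ℂ ℂ} {z₀ : ℂ}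
    (hp : HasFPowerSeriesAt f p z₀) (h : ¬∀ᶠ z in nhds z₀, f z = 0) :
    analyticOrderAt f z₀ = (p.order : ℕ∞) := by
  have hp0 : p ≠ 0 := fun h0 => h (hp.locally_zero_iff.mpr h0)
  rw [hp.analyticAt.analyticOrderAt_eq_natCast]
  exact ⟨_, ⟨_, hp.has_fpower_series_iterate_dslope_fslope p.order⟩,
    hp.iterate_dslope_fslope_ne_zero hp0, Filter.Eventually.of_forall hp.eq_pow_order_mul_iterate_dslope⟩

lemma order_eq_vanishingOrder {f : ℂ → ℂ} {z₀ : ℂ} (hf : AnalyticAt ℂ f z₀)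
    (h : ¬∀ᶠ z in nhds z₀, f z = 0) :
    analyticOrderAt f z₀ = (vanishingOrder f z₀ : ℕ∞) := by
  obtain ⟨p, hp⟩ := id hf
  rw [vanishingOrder_eq_series_order hp]
  exact analyticAt_order_eq hp h

lemma order_eq_zero_of_ne {f : ℂ → ℂ} {z₀ : ℂ} (hf : AnalyticAt ℂ f z₀) (h : f z₀ ≠ 0) :
    analyticOrderAt f z₀ = 0 := by
  rw [show (0 : ℕ∞) = ((0 : ℕ) : ℕ∞) from rfl, hf.analyticOrderAt_eq_natCast]
  exact ⟨f, hf, h, by filter_upwards with z; simp⟩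

lemma eq_zero_of_order_ne_zero {f : ℂ → ℂ} {z₀ : ℂ} (hf : AnalyticAt ℂ f z₀)
    (h : analyticOrderAt f z₀ ≠ 0) : f z₀ = 0 := by
  by_contra h'
  exact h (order_eq_zero_of_ne hf h')

lemma order_ne_zero_of_eq_zero {f : ℂ → ℂ} {z₀ : ℂ} (hf : AnalyticAt ℂ f z₀)
    (h : f z₀ = 0) : analyticOrderAt f z₀ ≠ 0 := by
  intro h'
  rw [show (0 : ℕ∞) = ((0 : ℕ) : ℕ∞) from rfl, hf.analyticOrderAt_eq_natCast] at h'
  obtain ⟨g, hg, hg0, hfg⟩ := h'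
  have := hfg.self_of_nhds
  simp [h] at this
  exact hg0 this.symm


lemma order_congr {f g : ℂ → ℂ} {z₀ : ℂ} (hf : AnalyticAt ℂ f z₀) (hg : AnalyticAt ℂ g z₀)
    (hfg : f =ᶠ[nhds z₀] g) {n : ℕ} (hn : analyticOrderAt f z₀ = n) : analyticOrderAt g z₀ = n := by
  rw [hf.analyticOrderAt_eq_natCast] at hn
  rw [hg.analyticOrderAt_eq_natCast]
  obtain ⟨h, hh, hh0, he⟩ := hn
  refine ⟨h, hh, hh0, ?_⟩
  filter_upwards [hfg, he] with z h1 h2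
  rw [← h1, h2]

lemma order_mul_unit {u f : ℂ → ℂ} {z₀ : ℂ} (hu : AnalyticAt ℂ u z₀) (hf : AnalyticAt ℂ f z₀)
    (hu0 : u z₀ ≠ 0) {n : ℕ} (hn : analyticOrderAt f z₀ = n) : analyticOrderAt (u * f) z₀ = n := by
  rw [hf.analyticOrderAt_eq_natCast] at hn
  rw [(hu.mul hf).analyticOrderAt_eq_natCast]
  obtain ⟨g, hg, hg0, hfg⟩ := hn
  refine ⟨fun z => u z * g z, hu.mul hg, mul_ne_zero hu0 hg0, ?_⟩
  filter_upwards [hfg] with z hz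
  simp only [smul_eq_mul, Pi.mul_apply] at hz ⊢
  rw [hz]; ring

lemma order_dslope {f : ℂ → ℂ} {a : ℂ} (hf : AnalyticAt ℂ f a) (hd : AnalyticAt ℂ (dslope f a) a)
    {n : ℕ} (hn : analyticOrderAt f a = (n + 1 : ℕ)) : analyticOrderAt (dslope f a) a = n := by
  have hfa : f a = 0 := by
    refine eq_zero_of_order_ne_zero hf ?_
    rw [hn]
    exact_mod_cast (Nat.succ_ne_zero n)
  rw [hf.analyticOrderAt_eq_natCast] at hn
  rw [hd.analyticOrderAt_eq_natCast]
  obtain ⟨g, hg, hg0, hfg⟩ := hn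
  refine ⟨g, hg, hg0, ?_⟩
  have hrhs : AnalyticAt ℂ (fun z => (z - a) ^ n • g z) a := by
    simp only [smul_eq_mul]
    exact (((analyticAt_id).sub analyticAt_const).pow n).mul hg
  refine (AnalyticAt.frequently_eq_iff_eventually_eq hd hrhs).mp ?_
  refine Filter.Eventually.frequently ?_
  rw [eventually_nhdsWithin_iff]
  filter_upwards [hfg] with z hz hza
  rw [mem_compl_iff, mem_singleton_iff] at hza
  rw [dslope_of_ne f hza, slope_def_field, hfa, sub_zero, hz]
  simp only [smul_eq_mul]
  rw [pow_succ]
  field_simp [sub_ne_zero.mpr hza]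

lemma not_eventually_zero {f : ℂ → ℂ} (hf : DifferentiableOn ℂ f (Metric.ball (0:ℂ) 1))
    (h0 : f 0 ≠ 0) {z : ℂ} (hz : z ∈ Metric.ball (0:ℂ) 1) : ¬∀ᶠ w in nhds z, f w = 0 := by
  intro h
  apply h0
  exact (hf.analyticOnNhd isOpen_ball).eqOn_zero_of_preconnected_of_eventuallyEq_zero
    (convex_ball (0:ℂ) 1).isPreconnected hz h (by simp : (0:ℂ) ∈ Metric.ball (0:ℂ) 1)



lemma key (M : ℝ) (n : ℕ) : ∀ (f : ℂ → ℂ), DifferentiableOn ℂ f (ball (0:ℂ) 1) → f 0 ≠ 0 →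
    (∀ z ∈ closedBall (0:ℂ) (3/4 : ℝ), ‖f z‖ ≤ M) →
    ∀ s : Finset ℂ, (∀ z ∈ s, z ∈ ball (0:ℂ) (1/2 : ℝ) ∧ f z = 0) →
    (∑ z ∈ s, vanishingOrder f z) = n →
    ‖f 0‖ * (9/8 : ℝ) ^ n ≤ M := by
  induction n with
  | zero =>
    intro f hdiff h0 hM s hs hsum
    simpa using hM 0 (by simp; norm_num)
  | succ n IH =>
    intro f hdiff h0 hM s hs hsum
    have hs_ne : s.Nonempty := by
      rcases Finset.eq_empty_or_nonempty s with rfl | h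
      · simp at hsum
      · exact h
    obtain ⟨a, ha⟩ := hs_ne
    obtain ⟨ha2, hfa⟩ := hs a ha
    have ha1 : a ∈ ball (0:ℂ) 1 := ball_subset_ball (by norm_num) ha2
    have hA : AnalyticOnNhd ℂ f (ball (0:ℂ) 1) := hdiff.analyticOnNhd isOpen_ball
    have hfa_an : AnalyticAt ℂ f a := hA a ha1
    have hnl : ∀ z ∈ ball (0:ℂ) 1, ¬∀ᶠ w in nhds z, f w = 0 := fun z hz =>
      not_eventually_zero hdiff h0 hz
    have horda : analyticOrderAt f a = (vanishingOrder f a : ℕ∞) :=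
      order_eq_vanishingOrder hfa_an (hnl a ha1)
    set m := vanishingOrder f a with hm
    have hm1 : 1 ≤ m := by
      rcases Nat.eq_zero_or_pos m with h | h
      · exfalso
        exact order_ne_zero_of_eq_zero hfa_an hfa (by rw [horda, h]; rfl)
      · exact h
    have ha0 : a ≠ 0 := by rintro rfl; exact h0 hfa
    have haabs : ‖a‖ < 1/2 := by
      rwa [mem_ball_zero_iff] at ha2
    have haabs0 : 0 < ‖a‖ := by
      simpa using (norm_pos_iff.mpr ha0)
    set u : ℂ → ℂ := fun z => (9/16 : ℂ) - (starRingEnd ℂ a) * z with hu_def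
    set g : ℂ → ℂ := fun z => u z * dslope f a z with hg_def
    have hu_an : ∀ z : ℂ, AnalyticAt ℂ u z := fun z =>
      analyticAt_const.sub (analyticAt_const.mul analyticAt_id)
    have hu0 : ∀ z ∈ ball (0:ℂ) 1, u z ≠ 0 := by
      intro z hz h
      rw [mem_ball_zero_iff] at hz
      have h916 : (9/16 : ℝ) = ‖a‖ * ‖z‖ := by
        have := congrArg norm (sub_eq_zero.mp h)
        simpa [norm_mul, Complex.norm_conj] using this
      nlinarith [norm_nonneg z, norm_nonneg a]
    have hd_an : AnalyticAt ℂ (dslope f a) a := by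
      obtain ⟨p, hp⟩ := hfa_an
      exact ⟨p.fslope, hp.has_fpower_series_dslope_fslope⟩
    have hdslope_diff : DifferentiableOn ℂ (dslope f a) (ball (0:ℂ) 1) := by
      intro z hz
      rcases eq_or_ne z a with rfl | hne
      · exact hd_an.differentiableAt.differentiableWithinAt
      · exact ((differentiableAt_dslope_of_ne hne).2
          (hdiff.differentiableAt (isOpen_ball.mem_nhds hz))).differentiableWithinAt
    have hu_diff : DifferentiableOn ℂ u (ball (0:ℂ) 1) :=
      ((differentiable_const _).sub ((differentiable_const _).mul differentiable_id)).differentiableOn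
    have hg_diff : DifferentiableOn ℂ g (ball (0:ℂ) 1) := hu_diff.mul hdslope_diff
    -- value at 0
    have hd0 : dslope f a 0 = f 0 / (-a) := by
      rw [dslope_of_ne f (Ne.symm ha0), slope_def_field, hfa, sub_zero, zero_sub]
    have hg0val : g 0 = (9/16 : ℂ) * (f 0 / (-a)) := by
      simp [hg_def, hu_def, hd0]
    have hg0abs : ‖g 0‖ = 9/16 * (‖f 0‖ / ‖a‖) := by
      simp only [hg0val, norm_mul, norm_div, norm_neg]
      norm_num
    have hg0 : g 0 ≠ 0 := by
      rw [hg0val]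
      exact mul_ne_zero (by norm_num) (div_ne_zero h0 (neg_ne_zero.mpr ha0))
    have hgain : 9/8 * ‖f 0‖ ≤ ‖g 0‖ := by
      have h3 : ‖f 0‖ * 2 ≤ ‖f 0‖ / ‖a‖ := by
        rw [le_div_iff₀ haabs0]
        nlinarith [norm_nonneg (f 0)]
      rw [hg0abs]
      linarith
    -- bound on the closed ball of radius 3/4 via the maximum principle
    have hsub34 : closedBall (0:ℂ) (3/4:ℝ) ⊆ ball (0:ℂ) 1 := closedBall_subset_ball (by norm_num)
    have hg_bound : ∀ z ∈ closedBall (0:ℂ) (3/4 : ℝ), ‖g z‖ ≤ M := by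
      have hdc : DiffContOnCl ℂ g (ball (0:ℂ) (3/4:ℝ)) := by
        refine ⟨hg_diff.mono (ball_subset_ball (by norm_num)), ?_⟩
        rw [closure_ball (0:ℂ) (by norm_num : (3/4:ℝ) ≠ 0)]
        exact hg_diff.continuousOn.mono hsub34
      have hfront : ∀ w ∈ frontier (ball (0:ℂ) (3/4:ℝ)), ‖g w‖ ≤ M := by
        rw [frontier_ball (0:ℂ) (by norm_num : (3/4:ℝ) ≠ 0)]
        intro w hw
        have hwabs : ‖w‖ = 3/4 := by
          rw [mem_sphere_zero_iff_norm] at hw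
          exact hw
        have hwa : w ≠ a := by
          intro h
          rw [h] at hwabs
          linarith
        have h1 : (starRingEnd ℂ) w * w = ((9/16 : ℝ) : ℂ) := by
          rw [mul_comm, Complex.mul_conj]
          norm_cast
          rw [Complex.normSq_eq_norm_sq, hwabs]
          norm_num
        have hval : u w = (starRingEnd ℂ) (w - a) * w := by
          have : u w = (starRingEnd ℂ) w * w - (starRingEnd ℂ) a * w := by
            rw [hu_def, h1]
            norm_num
          rw [this, map_sub]
          ring
        have habsu : ‖u w‖ = ‖w - a‖ * (3/4) := by
          rw [hval, norm_mul, Complex.norm_conj, hwabs]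
        have hgw : g w = u w * (f w / (w - a)) := by
          rw [hg_def]
          simp [dslope_of_ne f hwa, slope_def_field, hfa]
        have hwa0 : ‖w - a‖ ≠ 0 := by
          simpa [sub_eq_zero] using hwa
        rw [hgw, norm_mul, norm_div, habsu]
        have hfw : ‖f w‖ ≤ M := hM w (sphere_subset_closedBall hw)
        have : ‖w - a‖ * (3 / 4) * (‖f w‖ / ‖w - a‖)
            = 3/4 * ‖f w‖ := by
          field_simp
        rw [this]
        have := norm_nonneg (f w)
        linarith
      intro z hz
      have := Complex.norm_le_of_forall_mem_frontier_norm_le isBounded_ball hdc hfront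
        (z := z) (by rw [closure_ball (0:ℂ) (by norm_num : (3/4:ℝ) ≠ 0)]; exact hz)
      exact this
    -- zeros of g away from a
    have hgz : ∀ z ∈ s, z ≠ a → g z = 0 := by
      intro z hzs hza
      obtain ⟨hz2, hfz⟩ := hs z hzs
      rw [hg_def]
      simp [dslope_of_ne f hza, slope_def_field, hfz, hfa]
    -- vanishing orders of g away from a
    have hordz : ∀ z ∈ s, z ≠ a → vanishingOrder g z = vanishingOrder f z := by
      intro z hzs hza
      obtain ⟨hz2, hfz⟩ := hs z hzs
      have hz1 : z ∈ ball (0:ℂ) 1 := ball_subset_ball (by norm_num) hz2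
      have hfz_an : AnalyticAt ℂ f z := hA z hz1
      have hgz_an : AnalyticAt ℂ g z := (hg_diff.analyticOnNhd isOpen_ball) z hz1
      have h1 : analyticOrderAt f z = ((vanishingOrder f z : ℕ) : ℕ∞) :=
        order_eq_vanishingOrder hfz_an (hnl z hz1)
      have hv_an : AnalyticAt ℂ (fun w => u w * (w - a)⁻¹) z :=
        (hu_an z).mul ((analyticAt_id.sub analyticAt_const).inv (sub_ne_zero.mpr hza))
      have hvz : u z * (z - a)⁻¹ ≠ 0 :=
        mul_ne_zero (hu0 z hz1) (inv_ne_zero (sub_ne_zero.mpr hza))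
      have h2 := order_mul_unit hv_an hfz_an hvz h1
      have hcongr : (fun w => (u w * (w - a)⁻¹) * f w) =ᶠ[nhds z] g := by
        filter_upwards [eventually_ne_nhds hza] with w hwa
        rw [hg_def]
        simp only
        rw [dslope_of_ne f hwa, slope_def_field, hfa, sub_zero, div_eq_mul_inv]
        ring
      have h3 := order_congr (hv_an.mul hfz_an) hgz_an hcongr h2
      have h4 := order_eq_vanishingOrder hgz_an (not_eventually_zero hg_diff hg0 hz1)
      rw [h3] at h4
      exact_mod_cast h4.symm
    -- the order of g at a drops by one
    have hga_an : AnalyticAt ℂ g a := (hg_diff.analyticOnNhd isOpen_ball) a ha1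
    have hda : analyticOrderAt (dslope f a) a = ((m - 1 : ℕ) : ℕ∞) := by
      refine order_dslope hfa_an hd_an ?_
      rw [horda]
      congr 1
      omega
    have hga_ord : analyticOrderAt g a = ((m - 1 : ℕ) : ℕ∞) :=
      order_mul_unit (hu_an a) hd_an (hu0 a ha1) hda
    have hord_g_a : vanishingOrder g a = m - 1 := by
      have h4 := order_eq_vanishingOrder hga_an (not_eventually_zero hg_diff hg0 ha1)
      rw [hga_ord] at h4
      exact_mod_cast h4.symm
    -- case split on the multiplicity at a
    rcases eq_or_lt_of_le hm1 with hm_eq | hm_gt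
    · -- m = 1 : remove a from the set
      have hs' : ∀ z ∈ s.erase a, z ∈ ball (0:ℂ) (1/2 : ℝ) ∧ g z = 0 := by
        intro z hz
        exact ⟨(hs z (Finset.mem_of_mem_erase hz)).1,
          hgz z (Finset.mem_of_mem_erase hz) (Finset.ne_of_mem_erase hz)⟩
      have hsum' : ∑ z ∈ s.erase a, vanishingOrder g z = n := by
        have h5 : ∑ z ∈ s.erase a, vanishingOrder g z = ∑ z ∈ s.erase a, vanishingOrder f z :=
          Finset.sum_congr rfl fun z hz =>
            hordz z (Finset.mem_of_mem_erase hz) (Finset.ne_of_mem_erase hz)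
        have h6 := Finset.add_sum_erase s (vanishingOrder f) ha
        rw [h5]
        omega
      have hIH := IH g hg_diff hg0 hg_bound (s.erase a) hs' hsum'
      have hp : (0:ℝ) < (9/8 : ℝ) ^ n := by positivity
      calc ‖f 0‖ * (9/8 : ℝ) ^ (n+1)
          = (9/8 * ‖f 0‖) * (9/8 : ℝ) ^ n := by ring
        _ ≤ ‖g 0‖ * (9/8 : ℝ) ^ n := by nlinarith
        _ ≤ M := hIH
    · -- m ≥ 2 : keep the set, a is still a zero of g
      have hga0 : g a = 0 := by
        refine eq_zero_of_order_ne_zero hga_an ?_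
        rw [hga_ord]
        have : (m - 1 : ℕ) ≠ 0 := by omega
        exact_mod_cast this
      have hs' : ∀ z ∈ s, z ∈ ball (0:ℂ) (1/2 : ℝ) ∧ g z = 0 := by
        intro z hz
        rcases eq_or_ne z a with rfl | hne
        · exact ⟨ha2, hga0⟩
        · exact ⟨(hs z hz).1, hgz z hz hne⟩
      have hsum' : ∑ z ∈ s, vanishingOrder g z = n := by
        have h5 : ∑ z ∈ s.erase a, vanishingOrder g z = ∑ z ∈ s.erase a, vanishingOrder f z :=
          Finset.sum_congr rfl fun z hz =>
            hordz z (Finset.mem_of_mem_erase hz) (Finset.ne_of_mem_erase hz)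
        have h6 := Finset.add_sum_erase s (vanishingOrder f) ha
        have h7 := Finset.add_sum_erase s (vanishingOrder g) ha
        rw [h5, hord_g_a] at h7
        omega
      have hIH := IH g hg_diff hg0 hg_bound s hs' hsum'
      have hp : (0:ℝ) < (9/8 : ℝ) ^ n := by positivity
      calc ‖f 0‖ * (9/8 : ℝ) ^ (n+1)
          = (9/8 * ‖f 0‖) * (9/8 : ℝ) ^ n := by ring
        _ ≤ ‖g 0‖ * (9/8 : ℝ) ^ n := by nlinarith
        _ ≤ M := hIH

end ZeroCount

open Filter Function

/-- if `f` is holomorphic on the unit disc with `|f(0)| = 1` and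
`sup_{B_1} |f| ≤ 2^N`, then the number of zeros of `f` in `B_{1/2}`, counted with
multiplicity, is at most `C₁·N` for a universal constant `C₁ > 0`. -/
theorem zero_counting_bound :
    ∃ C₁ : ℝ, 0 < C₁ ∧
      ∀ (N : ℝ), 0 ≤ N →
        ∀ f : ℂ → ℂ, DifferentiableOn ℂ f (ball (0 : ℂ) 1) →
          ‖f 0‖ = 1 →
          (∀ z ∈ ball (0 : ℂ) 1, ‖f z‖ ≤ 2 ^ N) →
          (∑' z : {z : ℂ // z ∈ ball (0 : ℂ) (1 / 2) ∧ f z = 0},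
              (vanishingOrder f z : ENNReal)) ≤ ENNReal.ofReal (C₁ * N) := by
  refine ⟨6, by norm_num, ?_⟩
  intro N hN f hdiff habs1 hbound
  have h0 : f 0 ≠ 0 := by
    intro h
    rw [h] at habs1
    simp at habs1
  have hM : ∀ z ∈ closedBall (0:ℂ) (3/4 : ℝ), ‖f z‖ ≤ (2:ℝ) ^ N := fun z hz =>
    hbound z (closedBall_subset_ball (by norm_num) hz)
  rw [ENNReal.tsum_eq_iSup_sum]
  refine iSup_le fun t => ?_
  classical
  set t' : Finset ℂ := t.image Subtype.val with ht'
  have hinj : ∀ x ∈ t, ∀ y ∈ t, (Subtype.val x : ℂ) = Subtype.val y → x = y := by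
    intro x _ y _ h
    exact Subtype.ext h
  set n : ℕ := ∑ z ∈ t', vanishingOrder f z with hn
  have hsum_cast : ∑ x ∈ t, (vanishingOrder f ↑x : ENNReal) = ((n : ℕ) : ENNReal) := by
    rw [hn, ht', Finset.sum_image hinj]
    push_cast
    rfl
  rw [hsum_cast]
  have hmem : ∀ z ∈ t', z ∈ ball (0:ℂ) (1/2 : ℝ) ∧ f z = 0 := by
    intro z hz
    obtain ⟨x, _, rfl⟩ := Finset.mem_image.mp hz
    exact x.2
  have hkey := ZeroCount.key ((2:ℝ) ^ N) n f hdiff h0 hM t' hmem rfl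
  rw [habs1, one_mul] at hkey
  -- (9/8)^n ≤ 2^N implies n ≤ 6 N
  have h98 : (1:ℝ) < 9/8 := by norm_num
  have h2le : (2:ℝ) ≤ (9/8 : ℝ) ^ (6:ℕ) := by norm_num
  have hstep : ((2:ℝ)) ^ N ≤ ((9/8 : ℝ) ^ (6:ℕ)) ^ N :=
    Real.rpow_le_rpow (by norm_num) h2le hN
  have hstep2 : ((9/8 : ℝ) ^ (6:ℕ)) ^ N = (9/8 : ℝ) ^ ((6:ℝ) * N) := by
    rw [← Real.rpow_natCast (9/8 : ℝ) 6, ← Real.rpow_mul (by norm_num)]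
    norm_num
  have hfin : (9/8 : ℝ) ^ ((n:ℝ)) ≤ (9/8 : ℝ) ^ ((6:ℝ) * N) := by
    rw [Real.rpow_natCast]
    calc (9/8 : ℝ) ^ n ≤ (2:ℝ) ^ N := hkey
      _ ≤ _ := by rw [← hstep2]; exact hstep
  have hnN : (n : ℝ) ≤ 6 * N := (Real.rpow_le_rpow_left_iff h98).mp hfin
  calc ((n : ℕ) : ENNReal) = ENNReal.ofReal (n : ℝ) := by
        rw [ENNReal.ofReal_natCast]
    _ ≤ ENNReal.ofReal (6 * N) := ENNReal.ofReal_le_ofReal hnN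
end
end

section
/- Let θ(t) = t^{1/2}(log(1/t))^{3/2} for t ∈ (0,1/2], and for a given λ > 0 define σ : [0,1/(2λ)] → ℝ by σ(t) = t·exp(−∫₀^{λt} (1 − exp(−∫₀^s θ(τ) dτ/τ)) ds/s). Then σ satisfies the ODE d/dt log(σ/(tσ')) = θ(λt)/t with σ(0) = 0 and σ'(0) = 1, and there exists a universal constant N > 0 such that for all t with 0 ≤ λt ≤ 1/2 one has t/N ≤ σ(t) ≤ t and 1/N ≤ σ'(t) ≤ 1. -/
open MeasureTheory Metric Set Real

noncomputable section

/-- `θ(t) = t^{1/2} (log(1/t))^{3/2}`. -/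
def thetaFun (t : ℝ) : ℝ := Real.sqrt t * Real.log (1 / t) ^ ((3 : ℝ) / 2)

/-- `σ(t) = t · exp(−∫₀^{λt} (1 − exp(−∫₀^s θ(τ) dτ/τ)) ds/s)`. -/
def sigmaFun (l : ℝ) (t : ℝ) : ℝ :=
  t * Real.exp (-∫ s in (0 : ℝ)..(l * t),
      (1 - Real.exp (-∫ τ in (0 : ℝ)..s, thetaFun τ / τ)) / s)

def Ifun (s : ℝ) : ℝ := ∫ τ in (0 : ℝ)..s, thetaFun τ / τ

def gFun (s : ℝ) : ℝ := (1 - Real.exp (-Ifun s)) / s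

def Jfun (u : ℝ) : ℝ := ∫ s in (0 : ℝ)..u, gFun s

lemma sigma_eq (l t : ℝ) : sigmaFun l t = t * Real.exp (-Jfun (l * t)) := rfl

lemma theta_nonpos {τ : ℝ} (h : τ ≤ 0) : thetaFun τ = 0 := by
  unfold thetaFun
  rw [Real.sqrt_eq_zero'.mpr h, zero_mul]

lemma f_nonneg {τ : ℝ} (h1 : τ ≤ 1) : 0 ≤ thetaFun τ / τ := by
  rcases le_or_gt τ 0 with h | h
  · rw [theta_nonpos h, zero_div]
  · apply div_nonneg _ h.le
    apply mul_nonneg (Real.sqrt_nonneg _)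
    apply Real.rpow_nonneg
    apply Real.log_nonneg
    rw [le_div_iff₀ h, one_mul]; exact h1

lemma log_bound {τ : ℝ} (h0 : 0 < τ) : Real.log (1 / τ) ≤ 6 * τ ^ (-(1 : ℝ) / 6) := by
  have h1 : (0:ℝ) < 1 / τ := by positivity
  have h2 := Real.log_le_sub_one_of_pos (show (0:ℝ) < (1/τ) ^ ((1:ℝ)/6) by positivity)
  rw [Real.log_rpow h1] at h2
  have h3 : (1/τ : ℝ) ^ ((1:ℝ)/6) = τ ^ (-(1:ℝ)/6) := by
    rw [one_div, ← Real.rpow_neg_one τ, ← Real.rpow_mul h0.le]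
    norm_num
  rw [h3] at h2
  linarith

lemma f_le {τ : ℝ} (h0 : 0 < τ) (h1 : τ ≤ 1) :
    thetaFun τ / τ ≤ 15 * τ ^ (-(3 : ℝ) / 4) := by
  have hL : 0 ≤ Real.log (1/τ) := by
    apply Real.log_nonneg
    rw [le_div_iff₀ h0, one_mul]; exact h1
  have hb := log_bound h0
  have h2 : Real.log (1/τ) ^ ((3:ℝ)/2) ≤ (6 * τ ^ (-(1:ℝ)/6)) ^ ((3:ℝ)/2) :=
    Real.rpow_le_rpow hL hb (by norm_num)
  have h3 : (6 * τ ^ (-(1:ℝ)/6) : ℝ) ^ ((3:ℝ)/2) = 6 ^ ((3:ℝ)/2) * τ ^ (-(1:ℝ)/4) := by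
    rw [Real.mul_rpow (by norm_num) (Real.rpow_nonneg h0.le _), ← Real.rpow_mul h0.le]
    norm_num
  have h6 : (6:ℝ) ^ ((3:ℝ)/2) ≤ 15 := by
    have : (6:ℝ) ^ ((3:ℝ)/2) = 6 * Real.sqrt 6 := by
      rw [show ((3:ℝ)/2) = 1 + 1/2 by norm_num, Real.rpow_add (by norm_num), Real.rpow_one,
        Real.sqrt_eq_rpow]
    rw [this]
    nlinarith [Real.sq_sqrt (show (0:ℝ) ≤ 6 by norm_num), Real.sqrt_nonneg 6]
  have hτ4 : (0:ℝ) ≤ τ ^ (-(1:ℝ)/4) := (Real.rpow_nonneg h0.le _)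
  have key : Real.sqrt τ * τ ^ (-(1:ℝ)/4) / τ = τ ^ (-(3:ℝ)/4) := by
    rw [Real.sqrt_eq_rpow, ← Real.rpow_add h0, div_eq_mul_inv, ← Real.rpow_neg_one τ,
      ← Real.rpow_add h0]
    norm_num
  have h4 : Real.log (1/τ) ^ ((3:ℝ)/2) ≤ 15 * τ ^ (-(1:ℝ)/4) := by
    rw [h3] at h2; nlinarith
  calc thetaFun τ / τ ≤ Real.sqrt τ * (15 * τ ^ (-(1:ℝ)/4)) / τ := by
        unfold thetaFun
        gcongr
    _ = 15 * (Real.sqrt τ * τ ^ (-(1:ℝ)/4) / τ) := by ring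
    _ = 15 * τ ^ (-(3:ℝ)/4) := by rw [key]

lemma f_contAt {s : ℝ} (hs : 0 < s) : ContinuousAt (fun τ => thetaFun τ / τ) s := by
  apply ContinuousAt.div _ continuousAt_id hs.ne'
  apply ContinuousAt.mul Real.continuous_sqrt.continuousAt
  have h1 : ContinuousAt (fun τ : ℝ => Real.log (1 / τ)) s := by
    apply ContinuousAt.comp (Real.continuousAt_log (by positivity))
    exact continuousAt_const.div continuousAt_id hs.ne'
  exact (Real.continuousAt_rpow_const _ _ (Or.inr (by norm_num))).comp h1

lemma f_int {s : ℝ} (h0 : 0 ≤ s) (h1 : s ≤ 1) :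
    IntervalIntegrable (fun τ => thetaFun τ / τ) volume 0 s := by
  rw [intervalIntegrable_iff_integrableOn_Ioc_of_le h0]
  have hbd : IntegrableOn (fun τ : ℝ => 15 * τ ^ (-(3:ℝ)/4)) (Ioc 0 s) volume := by
    have := (intervalIntegral.intervalIntegrable_rpow' (a := 0) (b := s) (r := -(3:ℝ)/4) (by norm_num)).const_mul 15
    rwa [intervalIntegrable_iff_integrableOn_Ioc_of_le h0] at this
  apply hbd.mono'
  · apply ContinuousOn.aestronglyMeasurable _ measurableSet_Ioc
    exact fun τ hτ => (f_contAt hτ.1).continuousWithinAt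
  · filter_upwards [ae_restrict_mem measurableSet_Ioc] with τ hτ
    rw [Real.norm_of_nonneg (f_nonneg (hτ.2.trans h1))]
    exact f_le hτ.1 (hτ.2.trans h1)

lemma I_nonneg {s : ℝ} (h0 : 0 ≤ s) (h1 : s ≤ 1) : 0 ≤ Ifun s :=
  intervalIntegral.integral_nonneg h0 fun τ hτ => f_nonneg (hτ.2.trans h1)

lemma I_le {s : ℝ} (h0 : 0 ≤ s) (h1 : s ≤ 1) : Ifun s ≤ 60 * s ^ ((1:ℝ)/4) := by
  have hint := (intervalIntegral.intervalIntegrable_rpow' (a := 0) (b := s) (r := -(3:ℝ)/4) (by norm_num)).const_mul 15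
  have hmono : Ifun s ≤ ∫ τ in (0:ℝ)..s, 15 * τ ^ (-(3:ℝ)/4) := by
    apply intervalIntegral.integral_mono_on h0 (f_int h0 h1) hint
    intro τ hτ
    rcases eq_or_lt_of_le hτ.1 with h | h
    · rw [← h]
      simp [thetaFun, Real.zero_rpow (show (-(3:ℝ)/4) ≠ 0 by norm_num)]
    · exact f_le h (hτ.2.trans h1)
  have hval : (∫ τ in (0:ℝ)..s, 15 * τ ^ (-(3:ℝ)/4)) = 60 * s ^ ((1:ℝ)/4) := by
    rw [intervalIntegral.integral_const_mul, integral_rpow (Or.inl (by norm_num))]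
    rw [Real.zero_rpow (by norm_num : (-(3:ℝ)/4 + 1) ≠ 0)]
    norm_num
    ring
  linarith

lemma I_hasDeriv {s : ℝ} (h0 : 0 < s) (h1 : s ≤ 1) :
    HasDerivAt Ifun (thetaFun s / s) s := by
  apply intervalIntegral.integral_hasDerivAt_right (f_int h0.le h1)
  · exact ContinuousAt.stronglyMeasurableAtFilter isOpen_Ioi
      (fun x hx => f_contAt hx) s h0
  · exact f_contAt h0

lemma I_nonpos {s : ℝ} (h : s ≤ 0) : Ifun s = 0 := by
  have : Ifun s = ∫ τ in (0:ℝ)..s, (0:ℝ) := by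
    apply intervalIntegral.integral_congr
    intro τ hτ
    rw [Set.uIcc_of_ge h] at hτ
    simp [theta_nonpos hτ.2]
  simpa using this

lemma g_nonpos {s : ℝ} (h : s ≤ 0) : gFun s = 0 := by
  unfold gFun
  rw [I_nonpos h]
  simp

lemma g_nonneg {s : ℝ} (h1 : s ≤ 1) : 0 ≤ gFun s := by
  rcases le_or_gt s 0 with h | h
  · rw [g_nonpos h]
  · apply div_nonneg _ h.le
    have := Real.exp_le_one_iff.mpr (neg_nonpos.mpr (I_nonneg h.le h1))
    linarith

lemma g_le {s : ℝ} (h0 : 0 < s) (h1 : s ≤ 1) : gFun s ≤ 60 * s ^ (-(3:ℝ)/4) := by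
  have h2 : 1 - Real.exp (-Ifun s) ≤ Ifun s := by
    have := Real.add_one_le_exp (-Ifun s)
    linarith
  have h3 : gFun s ≤ Ifun s / s := by
    unfold gFun
    gcongr
  have h4 : Ifun s / s ≤ 60 * s ^ ((1:ℝ)/4) / s := by
    gcongr
    exact I_le h0.le h1
  have h5 : 60 * s ^ ((1:ℝ)/4) / s = 60 * s ^ (-(3:ℝ)/4) := by
    rw [div_eq_mul_inv, ← Real.rpow_neg_one s, mul_assoc, ← Real.rpow_add h0]
    norm_num
  linarith

lemma g_contAt {s : ℝ} (h0 : 0 < s) (h1 : s ≤ 1) : ContinuousAt gFun s := by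
  unfold gFun
  apply ContinuousAt.div _ continuousAt_id h0.ne'
  apply ContinuousAt.sub continuousAt_const
  exact (Real.continuous_exp.continuousAt).comp ((I_hasDeriv h0 h1).continuousAt.neg)

lemma g_int {u : ℝ} (h0 : 0 ≤ u) (h1 : u ≤ 1) :
    IntervalIntegrable gFun volume 0 u := by
  rw [intervalIntegrable_iff_integrableOn_Ioc_of_le h0]
  have hbd : IntegrableOn (fun s : ℝ => 60 * s ^ (-(3:ℝ)/4)) (Ioc 0 u) volume := by
    have := (intervalIntegral.intervalIntegrable_rpow' (a := 0) (b := u) (r := -(3:ℝ)/4)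
      (by norm_num)).const_mul 60
    rwa [intervalIntegrable_iff_integrableOn_Ioc_of_le h0] at this
  apply hbd.mono'
  · apply ContinuousOn.aestronglyMeasurable _ measurableSet_Ioc
    exact fun s hs => (g_contAt hs.1 (hs.2.trans h1)).continuousWithinAt
  · filter_upwards [ae_restrict_mem measurableSet_Ioc] with s hs
    rw [Real.norm_of_nonneg (g_nonneg (hs.2.trans h1))]
    exact g_le hs.1 (hs.2.trans h1)

lemma J_nonneg {u : ℝ} (h0 : 0 ≤ u) (h1 : u ≤ 1) : 0 ≤ Jfun u :=
  intervalIntegral.integral_nonneg h0 fun s hs => g_nonneg (hs.2.trans h1)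

lemma J_le {u : ℝ} (h0 : 0 ≤ u) (h1 : u ≤ 1) : Jfun u ≤ 240 * u ^ ((1:ℝ)/4) := by
  have hint := (intervalIntegral.intervalIntegrable_rpow' (a := 0) (b := u) (r := -(3:ℝ)/4)
    (by norm_num)).const_mul 60
  have hmono : Jfun u ≤ ∫ s in (0:ℝ)..u, 60 * s ^ (-(3:ℝ)/4) := by
    apply intervalIntegral.integral_mono_on h0 (g_int h0 h1) hint
    intro s hs
    rcases eq_or_lt_of_le hs.1 with h | h
    · rw [← h, g_nonpos le_rfl]
      simp [Real.zero_rpow (show (-(3:ℝ)/4) ≠ 0 by norm_num)]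
    · exact g_le h (hs.2.trans h1)
  have hval : (∫ s in (0:ℝ)..u, 60 * s ^ (-(3:ℝ)/4)) = 240 * u ^ ((1:ℝ)/4) := by
    rw [intervalIntegral.integral_const_mul, integral_rpow (Or.inl (by norm_num))]
    rw [Real.zero_rpow (by norm_num : (-(3:ℝ)/4 + 1) ≠ 0)]
    norm_num
    ring
  linarith

lemma J_nonpos {u : ℝ} (h : u ≤ 0) : Jfun u = 0 := by
  have : Jfun u = ∫ s in (0:ℝ)..u, (0:ℝ) := by
    apply intervalIntegral.integral_congr
    intro s hs
    rw [Set.uIcc_of_ge h] at hs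
    simp [g_nonpos hs.2]
  simpa using this

lemma J_hasDeriv {v : ℝ} (h0 : 0 < v) (h1 : v < 1) :
    HasDerivAt Jfun (gFun v) v := by
  apply intervalIntegral.integral_hasDerivAt_right (g_int h0.le h1.le)
  · exact ContinuousAt.stronglyMeasurableAtFilter (isOpen_Ioo (a := (0:ℝ)) (b := 1))
      (fun x hx => g_contAt hx.1 hx.2.le) v ⟨h0, h1⟩
  · exact g_contAt h0 h1.le

lemma sigma_hasDeriv {l t : ℝ} (hl : 0 < l) (ht : 0 < t) (h1 : l * t < 1) :
    HasDerivAt (sigmaFun l) (Real.exp (-(Jfun (l * t) + Ifun (l * t)))) t := by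
  have hv : 0 < l * t := mul_pos hl ht
  have hJ : HasDerivAt Jfun (gFun (l * t)) (l * t) := J_hasDeriv hv h1
  have hlt : HasDerivAt (fun u : ℝ => l * u) l t := by
    simpa using (hasDerivAt_id t).const_mul l
  have hJl : HasDerivAt (fun u => Jfun (l * u)) (gFun (l * t) * l) t := hJ.comp t hlt
  have hσ : HasDerivAt (fun u => u * Real.exp (-Jfun (l * u)))
      (1 * Real.exp (-Jfun (l * t)) + t * (Real.exp (-Jfun (l * t)) * -(gFun (l * t) * l))) t :=
    (hasDerivAt_id t).mul (hJl.neg.exp)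
  have hval : 1 * Real.exp (-Jfun (l * t)) + t * (Real.exp (-Jfun (l * t)) * -(gFun (l * t) * l))
      = Real.exp (-(Jfun (l * t) + Ifun (l * t))) := by
    have hgv : t * (gFun (l * t) * l) = 1 - Real.exp (-Ifun (l * t)) := by
      unfold gFun
      field_simp
    rw [neg_add, Real.exp_add]
    have expand : 1 * Real.exp (-Jfun (l * t)) +
        t * (Real.exp (-Jfun (l * t)) * -(gFun (l * t) * l))
        = Real.exp (-Jfun (l * t)) * (1 - t * (gFun (l * t) * l)) := by ring
    rw [expand, hgv]
    ring
  have : HasDerivAt (fun u => u * Real.exp (-Jfun (l * u)))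
      (Real.exp (-(Jfun (l * t) + Ifun (l * t)))) t := hval ▸ hσ
  exact this

lemma sigma_zero (l : ℝ) : sigmaFun l 0 = 0 := by simp [sigmaFun]

lemma sigma_hasDeriv0 {l : ℝ} (hl : 0 < l) : HasDerivAt (sigmaFun l) 1 0 := by
  rw [hasDerivAt_iff_tendsto_slope]
  have hslope : ∀ t : ℝ, t ≠ 0 → slope (sigmaFun l) 0 t = Real.exp (-Jfun (l * t)) := by
    intro t ht
    rw [slope_def_field, sigma_zero, sigma_eq]
    field_simp
    ring
  have hev : ∀ᶠ t : ℝ in nhds 0, l * t < 1 := by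
    have hc : Filter.Tendsto (fun t : ℝ => l * t) (nhds 0) (nhds 0) := by
      simpa using (continuous_mul_left l).tendsto (0:ℝ)
    exact hc.eventually_lt_const one_pos
  have hJ0 : Filter.Tendsto (fun t : ℝ => Jfun (l * t)) (nhds 0) (nhds 0) := by
    apply squeeze_zero' (g := fun t : ℝ => 240 * |l * t| ^ ((1:ℝ)/4))
    · filter_upwards [hev] with t htl
      rcases le_or_gt (l * t) 0 with h | h
      · rw [J_nonpos h]
      · exact J_nonneg h.le htl.le
    · filter_upwards [hev] with t htl
      rcases le_or_gt (l * t) 0 with h | h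
      · rw [J_nonpos h]
        positivity
      · rw [abs_of_pos h]
        exact J_le h.le htl.le
    · have h1 : Filter.Tendsto (fun t : ℝ => |l * t|) (nhds 0) (nhds 0) := by
        have hc : Continuous (fun t : ℝ => |l * t|) :=
          continuous_abs.comp (continuous_const.mul continuous_id)
        simpa using hc.tendsto (0:ℝ)
      have h2 : ContinuousAt (fun x : ℝ => x ^ ((1:ℝ)/4)) 0 :=
        Real.continuousAt_rpow_const 0 _ (Or.inr (by norm_num))
      have h3 := (h2.tendsto.comp h1).const_mul (240:ℝ)
      simpa [Real.zero_rpow (show ((1:ℝ)/4) ≠ 0 by norm_num)] using h3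
  have h3 : Filter.Tendsto (fun t : ℝ => Real.exp (-Jfun (l * t))) (nhds 0) (nhds 1) := by
    have hn : Filter.Tendsto (fun t : ℝ => -Jfun (l * t)) (nhds 0) (nhds 0) := by
      simpa using hJ0.neg
    have := (Real.continuous_exp.tendsto (0:ℝ)).comp hn
    simpa [Function.comp_def] using this
  have heq : ∀ᶠ t in nhdsWithin (0:ℝ) {(0:ℝ)}ᶜ,
      Real.exp (-Jfun (l * t)) = slope (sigmaFun l) 0 t :=
    eventually_mem_nhdsWithin.mono fun t ht => (hslope t ht).symm
  exact Filter.Tendsto.congr' heq (h3.mono_left nhdsWithin_le_nhds)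

/-- Lemma `sig` of the paper: for every `λ > 0` the function `σ`
solves the Cauchy problem `d/dt log(σ/(tσ')) = θ(λt)/t`, `σ(0) = 0`, `σ'(0) = 1`;
moreover there is a universal constant `N > 0` such that for `0 ≤ λt ≤ 1/2` one has
`t/N ≤ σ(t) ≤ t` and `1/N ≤ σ'(t) ≤ 1`. -/
theorem sigma_ode_and_bounds :
    ∃ N : ℝ, 0 < N ∧
      ∀ l : ℝ, 0 < l →
        sigmaFun l 0 = 0 ∧
        deriv (sigmaFun l) 0 = 1 ∧
        (∀ t : ℝ, 0 < t → l * t ≤ 1 / 2 →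
          HasDerivAt (fun s => Real.log (sigmaFun l s / (s * deriv (sigmaFun l) s)))
            (thetaFun (l * t) / t) t) ∧
        (∀ t : ℝ, 0 ≤ t → l * t ≤ 1 / 2 →
          t / N ≤ sigmaFun l t ∧ sigmaFun l t ≤ t ∧
          1 / N ≤ deriv (sigmaFun l) t ∧ deriv (sigmaFun l) t ≤ 1) := by
  refine ⟨Real.exp 300, Real.exp_pos _, fun l hl => ?_⟩
  refine ⟨sigma_zero l, (sigma_hasDeriv0 hl).deriv, ?_, ?_⟩
  · -- the ODE
    intro t ht hlt
    have hv : 0 < l * t := mul_pos hl ht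
    have hv1 : l * t < 1 := lt_of_le_of_lt hlt (by norm_num)
    have hlt' : HasDerivAt (fun u : ℝ => l * u) l t := by
      simpa using (hasDerivAt_id t).const_mul l
    have hI := I_hasDeriv hv hv1.le
    have hmain : HasDerivAt (fun s => Ifun (l * s)) (thetaFun (l * t) / (l * t) * l) t :=
      hI.comp t hlt'
    have hval : thetaFun (l * t) / (l * t) * l = thetaFun (l * t) / t := by
      field_simp
    rw [hval] at hmain
    have hmem : Set.Ioo (0:ℝ) (1 / l) ∈ nhds t := by
      apply isOpen_Ioo.mem_nhds
      refine ⟨ht, ?_⟩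
      rw [lt_div_iff₀ hl]
      nlinarith
    have heq : ∀ᶠ s in nhds t,
        Real.log (sigmaFun l s / (s * deriv (sigmaFun l) s)) = Ifun (l * s) := by
      filter_upwards [hmem] with s hs
      have hs0 : 0 < s := hs.1
      have hls : l * s < 1 := by
        have := hs.2
        rw [lt_div_iff₀ hl] at this
        nlinarith
      have hd := (sigma_hasDeriv hl hs0 hls).deriv
      rw [hd, sigma_eq]
      rw [mul_div_mul_left _ _ hs0.ne', ← Real.exp_sub, Real.log_exp]
      ring
    exact hmain.congr_of_eventuallyEq heq
  · -- the bounds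
    intro t ht hlt
    rcases eq_or_lt_of_le ht with h0 | h0
    · rw [← h0]
      rw [sigma_zero, (sigma_hasDeriv0 hl).deriv]
      have h1 : (1:ℝ) ≤ Real.exp 300 := Real.one_le_exp (by norm_num)
      have h2 : 0 < Real.exp (300:ℝ) := Real.exp_pos _
      refine ⟨by simp, by simp, ?_, le_refl 1⟩
      rw [div_le_one h2]
      exact h1
    · have hv : 0 < l * t := mul_pos hl h0
      have hv1 : l * t < 1 := lt_of_le_of_lt hlt (by norm_num)
      have hr1 : (l * t) ^ ((1:ℝ)/4) ≤ 1 :=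
        Real.rpow_le_one hv.le hv1.le (by norm_num)
      have hJ0 := J_nonneg hv.le hv1.le
      have hJle : Jfun (l * t) ≤ 240 := by
        have := J_le hv.le hv1.le
        nlinarith
      have hI0 := I_nonneg hv.le hv1.le
      have hIle : Ifun (l * t) ≤ 60 := by
        have := I_le hv.le hv1.le
        nlinarith
      have hd := (sigma_hasDeriv hl h0 hv1).deriv
      rw [sigma_eq, hd]
      refine ⟨?_, ?_, ?_, ?_⟩
      · rw [div_eq_mul_inv, ← Real.exp_neg]
        apply mul_le_mul_of_nonneg_left _ ht
        exact Real.exp_le_exp.mpr (by linarith)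
      · have : Real.exp (-Jfun (l * t)) ≤ 1 :=
          Real.exp_le_one_iff.mpr (by linarith)
        nlinarith
      · rw [one_div, ← Real.exp_neg]
        exact Real.exp_le_exp.mpr (by linarith)
      · exact Real.exp_le_one_iff.mpr (by linarith)
end
end

section
/- (Rellich identity) Let Ω ⊂ ℝⁿ be a piecewise C¹ bounded open set, Z ∈ C^{0,1}(Ω̄; ℝⁿ) a Lipschitz vector field, and f ∈ C^{1,1}(Ω̄). Then 2 ∫_{∂Ω} (Zf)·(∂f/∂ν) dσ − ∫_{∂Ω} |∇f|² ⟨Z, ν⟩ dσ = 2 ∫_Ω (Zf)·Δf dx − ∫_Ω (div Z)·|∇f|² dx + 2 Σ_{j=1}^n ∫_Ω ([D_j, Z]f)·(D_j f) dx, where Zf = ⟨Z, ∇f⟩, ν is the outward unit normal on ∂Ω, dσ is surface measure, and [D_j, Z]f = Σ_{k=1}^n (D_j Z_k)(D_k f) is the commutator of the partial derivative D_j with Z regarded as the first-order operator Σ_k Z_k D_k. In particular, if Z(x) = x and f ∈ C^{1,1}_0(Ω̄), then ∫_Ω ⟨x, ∇f⟩ Δf dx = (n/2 − 1) ∫_Ω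 |∇f|² dx. -/
open MeasureTheory Metric Set Real
open scoped RealInnerProductSpace

noncomputable section

/-- `ℝⁿ` as a Euclidean space. -/
abbrev En (n : ℕ) : Type := EuclideanSpace ℝ (Fin n)

/-- The `i`-th partial derivative of a scalar function. -/
def pder {n : ℕ} (i : Fin n) (f : En n → ℝ) (x : En n) : ℝ :=
  fderiv ℝ f x (EuclideanSpace.single i 1)

/-- The Laplacian of a scalar function. -/
def lap {n : ℕ} (f : En n → ℝ) (x : En n) : ℝ :=
  ∑ i, fderiv ℝ (fun y => pder i f y) x (EuclideanSpace.single i 1)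

/-- The divergence of a vector field. -/
def divg {n : ℕ} (F : En n → En n) (x : En n) : ℝ :=
  ∑ i, fderiv ℝ (fun y => F y i) x (EuclideanSpace.single i 1)

variable {n : ℕ}

lemma grad_inner (f : En n → ℝ) (x v : En n) : ⟪gradient f x, v⟫ = fderiv ℝ f x v := by
  simp [gradient, InnerProductSpace.toDual_symm_apply]

lemma grad_apply (f : En n → ℝ) (x : En n) (k : Fin n) :
    gradient f x k = pder k f x := by
  have := grad_inner f x (EuclideanSpace.single k 1)
  rw [pder, ← this, EuclideanSpace.inner_single_right]; simp

lemma pder_eq_grad (f : En n → ℝ) (k : Fin n) :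
    (fun y => pder k f y) = (fun y => gradient f y k) := by
  funext y; rw [grad_apply]

/-- product of bounded Lipschitz scalar and bounded Lipschitz vector field -/
lemma lipschitz_smul_bdd {α : Type*} [PseudoMetricSpace α]
    {F : Type*} [NormedAddCommGroup F] [NormedSpace ℝ F]
    {u : α → ℝ} {W : α → F} {Ku KW : NNReal} {Mu MW : ℝ}
    (hu : LipschitzWith Ku u) (hW : LipschitzWith KW W)
    (hbu : ∀ x, |u x| ≤ Mu) (hbW : ∀ x, ‖W x‖ ≤ MW) :
    ∃ K : NNReal, LipschitzWith K (fun x => u x • W x) := by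
  refine ⟨Real.toNNReal (Mu * KW + Ku * MW), LipschitzWith.of_dist_le_mul fun x y => ?_⟩
  have h1 : dist (u x • W x) (u y • W y) ≤ |u x| * ‖W x - W y‖ + |u x - u y| * ‖W y‖ := by
    rw [dist_eq_norm]
    calc ‖u x • W x - u y • W y‖ = ‖u x • (W x - W y) + (u x - u y) • W y‖ := by
          congr 1; rw [smul_sub, sub_smul]; abel
      _ ≤ ‖u x • (W x - W y)‖ + ‖(u x - u y) • W y‖ := norm_add_le _ _
      _ = |u x| * ‖W x - W y‖ + |u x - u y| * ‖W y‖ := by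
          simp [norm_smul, Real.norm_eq_abs]
  have h2 : ‖W x - W y‖ ≤ KW * dist x y := by
    rw [← dist_eq_norm]; exact hW.dist_le_mul x y
  have h3 : |u x - u y| ≤ Ku * dist x y := by
    rw [← Real.dist_eq]; exact hu.dist_le_mul x y
  have hd : (0:ℝ) ≤ dist x y := dist_nonneg
  have h4 : |u x| * ‖W x - W y‖ ≤ Mu * (KW * dist x y) :=
    mul_le_mul (hbu x) h2 (norm_nonneg _) ((abs_nonneg _).trans (hbu x))
  have h5 : |u x - u y| * ‖W y‖ ≤ (Ku * dist x y) * MW :=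
    mul_le_mul h3 (hbW y) (norm_nonneg _) (by positivity)
  have : dist (u x • W x) (u y • W y) ≤ (Mu * KW + Ku * MW) * dist x y := by nlinarith
  refine this.trans (mul_le_mul_of_nonneg_right ?_ hd)
  exact Real.le_coe_toNNReal _

lemma lipschitz_inner_bdd {α : Type*} [PseudoMetricSpace α]
    {u W : α → En n} {Ku KW : NNReal} {Mu MW : ℝ}
    (hu : LipschitzWith Ku u) (hW : LipschitzWith KW W)
    (hbu : ∀ x, ‖u x‖ ≤ Mu) (hbW : ∀ x, ‖W x‖ ≤ MW) :
    ∃ K : NNReal, LipschitzWith K (fun x => ⟪u x, W x⟫) := by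
  refine ⟨Real.toNNReal (Mu * KW + Ku * MW), LipschitzWith.of_dist_le_mul fun x y => ?_⟩
  have h1 : dist (⟪u x, W x⟫:ℝ) ⟪u y, W y⟫ ≤ ‖u x‖ * ‖W x - W y‖ + ‖u x - u y‖ * ‖W y‖ := by
    rw [Real.dist_eq]
    have : (⟪u x, W x⟫:ℝ) - ⟪u y, W y⟫ = ⟪u x, W x - W y⟫ + ⟪u x - u y, W y⟫ := by
      rw [inner_sub_right, inner_sub_left]; ring
    rw [this]
    refine (abs_add_le _ _).trans (add_le_add ?_ ?_)
    · exact (abs_real_inner_le_norm _ _)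
    · exact (abs_real_inner_le_norm _ _)
  have h2 : ‖W x - W y‖ ≤ KW * dist x y := by
    rw [← dist_eq_norm]; exact hW.dist_le_mul x y
  have h3 : ‖u x - u y‖ ≤ Ku * dist x y := by
    rw [← dist_eq_norm]; exact hu.dist_le_mul x y
  have hd : (0:ℝ) ≤ dist x y := dist_nonneg
  have h4 : ‖u x‖ * ‖W x - W y‖ ≤ Mu * (KW * dist x y) :=
    mul_le_mul (hbu x) h2 (norm_nonneg _) ((norm_nonneg _).trans (hbu x))
  have h5 : ‖u x - u y‖ * ‖W y‖ ≤ (Ku * dist x y) * MW :=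
    mul_le_mul h3 (hbW y) (norm_nonneg _) (by positivity)
  have : dist (⟪u x, W x⟫:ℝ) ⟪u y, W y⟫ ≤ (Mu * KW + Ku * MW) * dist x y := by nlinarith
  refine this.trans (mul_le_mul_of_nonneg_right (Real.le_coe_toNNReal _) hd)

/-- cutoff smul: u Lipschitz bounded with support in a ball, W Lipschitz (not nec. bounded). -/
lemma lipschitz_smul_cutoff {F : Type*} [NormedAddCommGroup F] [NormedSpace ℝ F]
    {u : En n → ℝ} {W : En n → F} {Ku KW : NNReal} {Mu ρ : ℝ}
    (hu : LipschitzWith Ku u) (hW : LipschitzWith KW W)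
    (hbu : ∀ x, |u x| ≤ Mu) (hρ : 0 ≤ ρ) (hsupp : ∀ x : En n, ρ ≤ ‖x‖ → u x = 0) :
    ∃ K : NNReal, LipschitzWith K (fun x => u x • W x) := by
  set C : ℝ := ‖W 0‖ + KW * ρ with hC
  have hCn : 0 ≤ C := by positivity
  have hWb : ∀ y : En n, ‖y‖ ≤ ρ → ‖W y‖ ≤ C := by
    intro y hy
    have : ‖W y - W 0‖ ≤ KW * ρ := by
      have := hW.dist_le_mul y 0
      rw [dist_eq_norm, dist_eq_norm, sub_zero] at this
      exact this.trans (by nlinarith [NNReal.coe_nonneg KW])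
    calc ‖W y‖ = ‖W 0 + (W y - W 0)‖ := by rw [add_sub_cancel]
      _ ≤ ‖W 0‖ + ‖W y - W 0‖ := norm_add_le _ _
      _ ≤ C := by rw [hC]; linarith
  have hMu : 0 ≤ Mu := (abs_nonneg _).trans (hbu 0)
  refine ⟨Real.toNNReal (Mu * KW + Ku * C), LipschitzWith.of_dist_le_mul fun x y => ?_⟩
  have key : ∀ a b : En n, ‖a‖ ≤ ρ →
      dist (u a • W a) (u b • W b) ≤ (Mu * KW + Ku * C) * dist a b := by
    intro a b ha
    have h1 : dist (u a • W a) (u b • W b) ≤ |u b| * ‖W a - W b‖ + |u a - u b| * ‖W a‖ := by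
      rw [dist_eq_norm]
      calc ‖u a • W a - u b • W b‖ = ‖u b • (W a - W b) + (u a - u b) • W a‖ := by
            congr 1; rw [smul_sub, sub_smul]; abel
        _ ≤ ‖u b • (W a - W b)‖ + ‖(u a - u b) • W a‖ := norm_add_le _ _
        _ = |u b| * ‖W a - W b‖ + |u a - u b| * ‖W a‖ := by
            simp [norm_smul, Real.norm_eq_abs]
    have h2 : ‖W a - W b‖ ≤ KW * dist a b := by
      rw [← dist_eq_norm]; exact hW.dist_le_mul a b
    have h3 : |u a - u b| ≤ Ku * dist a b := by
      rw [← Real.dist_eq]; exact hu.dist_le_mul a b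
    have h6 : ‖W a‖ ≤ C := hWb a ha
    have hd : (0:ℝ) ≤ dist a b := dist_nonneg
    nlinarith [abs_nonneg (u b), norm_nonneg (W a - W b), abs_nonneg (u a - u b),
      norm_nonneg (W a), hbu b, NNReal.coe_nonneg Ku, NNReal.coe_nonneg KW,
      mul_le_mul (hbu b) h2 (norm_nonneg _) hMu,
      mul_le_mul h3 h6 (norm_nonneg _) (by positivity : (0:ℝ) ≤ (Ku:ℝ) * dist a b)]
  have hle : ∀ a b : En n, dist (u a • W a) (u b • W b) ≤ (Mu * KW + Ku * C) * dist a b := by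
    intro a b
    by_cases ha : ‖a‖ ≤ ρ
    · exact key a b ha
    by_cases hb : ‖b‖ ≤ ρ
    · rw [dist_comm, dist_comm a b]; exact key b a hb
    · have : u a = 0 := hsupp a (le_of_not_ge ha)
      have hb0 : u b = 0 := hsupp b (le_of_not_ge hb)
      simp [this, hb0]
      positivity
  exact (hle x y).trans (mul_le_mul_of_nonneg_right (Real.le_coe_toNNReal _) dist_nonneg)

lemma diff_coord {W : En n → En n} {x : En n} (hW : DifferentiableAt ℝ W x) (i : Fin n) :
    DifferentiableAt ℝ (fun y => W y i) x :=
  ((EuclideanSpace.proj (𝕜 := ℝ) i).hasFDerivAt.comp x hW.hasFDerivAt).differentiableAt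

lemma fderiv_coord {W : En n → En n} {x : En n} (hW : DifferentiableAt ℝ W x) (i : Fin n)
    (v : En n) : fderiv ℝ (fun y => W y i) x v = fderiv ℝ W x v i := by
  have h := ((EuclideanSpace.proj (𝕜 := ℝ) i).hasFDerivAt.comp x hW.hasFDerivAt).fderiv
  have : fderiv ℝ (fun y => W y i) x
      = (EuclideanSpace.proj (𝕜 := ℝ) i).comp (fderiv ℝ W x) := h
  rw [this]; rfl

lemma divg_smul (u : En n → ℝ) (W : En n → En n) (x : En n)
    (hu : DifferentiableAt ℝ u x) (hW : DifferentiableAt ℝ W x) :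
    divg (fun y => u y • W y) x
      = (∑ i, fderiv ℝ u x (EuclideanSpace.single i 1) * W x i) + u x * divg W x := by
  unfold divg
  have key : ∀ i : Fin n, fderiv ℝ (fun y => (u y • W y) i) x (EuclideanSpace.single i 1)
      = fderiv ℝ u x (EuclideanSpace.single i 1) * W x i
        + u x * fderiv ℝ (fun y => W y i) x (EuclideanSpace.single i 1) := by
    intro i
    have hcoord : (fun y => (u y • W y) i) = fun y => u y * W y i := by
      funext y; rfl
    rw [hcoord, fderiv_fun_mul hu (diff_coord hW i)]
    simp only [ContinuousLinearMap.add_apply, ContinuousLinearMap.smul_apply, smul_eq_mul]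
    ring
  rw [Finset.sum_congr rfl (fun i _ => key i), Finset.sum_add_distrib, Finset.mul_sum]

lemma lap_eq_divg (f : En n → ℝ) : lap f = divg (gradient f) := by
  funext x
  unfold lap divg
  refine Finset.sum_congr rfl fun i _ => ?_
  rw [pder_eq_grad]

lemma fderiv_inner_ZW {Z W : En n → En n} {x : En n} (hZ : DifferentiableAt ℝ Z x)
    (hW : DifferentiableAt ℝ W x) (v : En n) :
    fderiv ℝ (fun y => ⟪Z y, W y⟫) x v = ⟪Z x, fderiv ℝ W x v⟫ + ⟪fderiv ℝ Z x v, W x⟫ :=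
  fderiv_inner_apply ℝ hZ hW v

lemma hess_symm (f : En n → ℝ) (x : En n) (hf : ContDiff ℝ 1 f)
    (hW : DifferentiableAt ℝ (gradient f) x)
    (hF : DifferentiableAt ℝ (fun y => fderiv ℝ f y) x) (v w : En n) :
    ⟪fderiv ℝ (gradient f) x v, w⟫ = ⟪fderiv ℝ (gradient f) x w, v⟫ := by
  have hfd : ∀ y, HasFDerivAt f (fderiv ℝ f y) y :=
    fun y => (hf.differentiable one_ne_zero y).hasFDerivAt
  have hsymm := second_derivative_symmetric hfd hF.hasFDerivAt
  have key : ∀ a b : En n, ⟪fderiv ℝ (gradient f) x a, b⟫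
      = (fderiv ℝ (fun y => fderiv ℝ f y) x a) b := by
    intro a b
    have h1 : (fun y => (⟪gradient f y, b⟫ : ℝ)) = (fun y => fderiv ℝ f y b) :=
      funext fun y => grad_inner f y b
    have h2 : fderiv ℝ (fun y => (⟪gradient f y, b⟫ : ℝ)) x a
        = ⟪fderiv ℝ (gradient f) x a, b⟫ := by
      rw [fderiv_inner_apply ℝ hW (differentiableAt_const b) a]
      simp
    have h3 : fderiv ℝ (fun y => fderiv ℝ f y b) x a
        = (fderiv ℝ (fun y => fderiv ℝ f y) x a) b := by
      have hc := ((ContinuousLinearMap.apply ℝ ℝ b).hasFDerivAt.comp x hF.hasFDerivAt).fderiv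
      have : fderiv ℝ (fun y => fderiv ℝ f y b) x
          = (ContinuousLinearMap.apply ℝ ℝ b).comp (fderiv ℝ (fun y => fderiv ℝ f y) x) := hc
      rw [this]; rfl
    rw [← h2, h1, h3]
  rw [key v w, key w v]
  exact hsymm v w

lemma coord_inner (a b : En n) : (⟪a, b⟫ : ℝ) = ∑ k, a k * b k := by
  rw [PiLp.inner_apply]; simp [RCLike.inner_apply, conj_trivial, mul_comm]

lemma pointA (Z : En n → En n) (f : En n → ℝ) (x : En n)
    (hZ : DifferentiableAt ℝ Z x) (hW : DifferentiableAt ℝ (gradient f) x) :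
    divg (fun y => ⟪Z y, gradient f y⟫ • gradient f y) x
    = ⟪Z x, gradient f x⟫ * lap f x
      + (∑ i, (⟪Z x, fderiv ℝ (gradient f) x (EuclideanSpace.single i 1)⟫:ℝ)
          * gradient f x i)
      + ∑ j, (∑ k, fderiv ℝ (fun y => Z y k) x (EuclideanSpace.single j 1) * pder k f x)
          * pder j f x := by
  have hu1 : DifferentiableAt ℝ (fun y => (⟪Z y, gradient f y⟫ : ℝ)) x := hZ.inner ℝ hW
  rw [divg_smul _ _ _ hu1 hW, ← lap_eq_divg]
  have h1 : ∑ i, fderiv ℝ (fun y => (⟪Z y, gradient f y⟫:ℝ)) x (EuclideanSpace.single i 1)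
        * gradient f x i
      = (∑ i, (⟪Z x, fderiv ℝ (gradient f) x (EuclideanSpace.single i 1)⟫:ℝ) * gradient f x i)
        + ∑ i, (⟪fderiv ℝ Z x (EuclideanSpace.single i 1), gradient f x⟫:ℝ) * gradient f x i := by
    rw [← Finset.sum_add_distrib]
    refine Finset.sum_congr rfl fun i _ => ?_
    rw [fderiv_inner_ZW hZ hW]; ring
  have h4 : ∑ i, (⟪fderiv ℝ Z x (EuclideanSpace.single i 1), gradient f x⟫:ℝ) * gradient f x i
      = ∑ j, (∑ k, fderiv ℝ (fun y => Z y k) x (EuclideanSpace.single j 1) * pder k f x)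
          * pder j f x := by
    refine Finset.sum_congr rfl fun j _ => ?_
    rw [coord_inner]
    have hWk : ∀ k, gradient f x k = pder k f x := fun k => grad_apply f x k
    rw [show gradient f x j = pder j f x from hWk j]
    congr 1
    refine Finset.sum_congr rfl fun k _ => ?_
    rw [fderiv_coord hZ, hWk k]
  rw [h1, h4]; ring

lemma pointB (Z : En n → En n) (f : En n → ℝ) (x : En n) (hf : ContDiff ℝ 1 f)
    (hZ : DifferentiableAt ℝ Z x) (hW : DifferentiableAt ℝ (gradient f) x)
    (hF : DifferentiableAt ℝ (fun y => fderiv ℝ f y) x) :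
    divg (fun y => ⟪gradient f y, gradient f y⟫ • Z y) x
    = 2 * (∑ i, (⟪Z x, fderiv ℝ (gradient f) x (EuclideanSpace.single i 1)⟫:ℝ)
          * gradient f x i)
      + divg Z x * ‖gradient f x‖ ^ 2 := by
  have hu2 : DifferentiableAt ℝ (fun y => (⟪gradient f y, gradient f y⟫ : ℝ)) x := hW.inner ℝ hW
  rw [divg_smul _ _ _ hu2 hZ]
  have hsym : ∀ v w : En n, ⟪fderiv ℝ (gradient f) x v, w⟫ = ⟪fderiv ℝ (gradient f) x w, v⟫ :=
    hess_symm f x hf hW hF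
  set W' := fderiv ℝ (gradient f) x with hW'
  set Wx := gradient f x with hWx
  set e : Fin n → En n := fun i => EuclideanSpace.single i 1 with he
  have hco : ∀ i k : Fin n, W' (e i) k = W' (e k) i := by
    intro i k
    have h1 := hsym (e i) (e k)
    rw [EuclideanSpace.inner_single_right, EuclideanSpace.inner_single_right] at h1
    simpa using h1
  have h2 : ∑ i, fderiv ℝ (fun y => (⟪gradient f y, gradient f y⟫:ℝ)) x (e i) * Z x i
      = 2 * ∑ i, (⟪Wx, W' (e i)⟫:ℝ) * Z x i := by
    rw [Finset.mul_sum]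
    refine Finset.sum_congr rfl fun i _ => ?_
    rw [fderiv_inner_ZW hW hW, real_inner_comm (W' (e i)) Wx]; ring
  have h3 : (⟪Wx, Wx⟫ : ℝ) = ‖Wx‖ ^ 2 := real_inner_self_eq_norm_sq Wx
  have h5 : ∑ i, (⟪Z x, W' (e i)⟫:ℝ) * Wx i = ∑ i, (⟪Wx, W' (e i)⟫:ℝ) * Z x i := by
    have expl : ∀ i, (⟪Z x, W' (e i)⟫:ℝ) * Wx i = ∑ k, Z x k * W' (e k) i * Wx i := by
      intro i
      rw [coord_inner, Finset.sum_mul]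
      exact Finset.sum_congr rfl fun k _ => by rw [hco i k]
    have expr : ∀ i, (⟪Wx, W' (e i)⟫:ℝ) * Z x i = ∑ k, Wx k * W' (e i) k * Z x i := by
      intro i
      rw [coord_inner, Finset.sum_mul]
    rw [Finset.sum_congr rfl fun i _ => expl i, Finset.sum_congr rfl fun i _ => expr i,
      Finset.sum_comm]
    exact Finset.sum_congr rfl fun i _ => Finset.sum_congr rfl fun k _ => by ring
  rw [h2, h3, h5]; ring

lemma divg_congr_nhds {F G : En n → En n} {x : En n} (h : F =ᶠ[nhds x] G) :
    divg F x = divg G x := by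
  unfold divg
  refine Finset.sum_congr rfl fun i _ => ?_
  have : (fun y => F y i) =ᶠ[nhds x] (fun y => G y i) := h.mono fun y hy => by
    show F y i = G y i; rw [hy]
  rw [this.fderiv_eq]

lemma coord_abs_le (x : En n) (i : Fin n) : |x i| ≤ ‖x‖ := by
  have h := abs_real_inner_le_norm x (EuclideanSpace.single i 1)
  rw [EuclideanSpace.inner_single_right, EuclideanSpace.norm_single] at h
  simpa using h

lemma lipschitz_coord {W : En n → En n} {K : NNReal} (hW : LipschitzWith K W) (i : Fin n) :
    LipschitzWith K (fun y => W y i) := by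
  refine LipschitzWith.of_dist_le_mul fun x y => ?_
  rw [Real.dist_eq]
  calc |W x i - W y i| = |(W x - W y) i| := by simp [PiLp.sub_apply]
    _ ≤ ‖W x - W y‖ := coord_abs_le _ i
    _ = dist (W x) (W y) := (dist_eq_norm _ _).symm
    _ ≤ K * dist x y := hW.dist_le_mul x y

lemma fderiv_apply_single_le {g : En n → ℝ} {K : NNReal} (hg : LipschitzWith K g) (x : En n)
    (i : Fin n) : |fderiv ℝ g x (EuclideanSpace.single i 1)| ≤ K := by
  have h1 : ‖fderiv ℝ g x‖ ≤ K := norm_fderiv_le_of_lipschitz ℝ hg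
  calc |fderiv ℝ g x (EuclideanSpace.single i 1)|
      ≤ ‖fderiv ℝ g x‖ * ‖EuclideanSpace.single i (1:ℝ)‖ := (fderiv ℝ g x).le_opNorm _
    _ ≤ K := by rw [EuclideanSpace.norm_single, norm_one, mul_one]; exact h1

lemma fderiv_vec_apply_single_le {W : En n → En n} {K : NNReal} (hW : LipschitzWith K W)
    (x : En n) (i : Fin n) : ‖fderiv ℝ W x (EuclideanSpace.single i 1)‖ ≤ K := by
  have h1 : ‖fderiv ℝ W x‖ ≤ K := norm_fderiv_le_of_lipschitz ℝ hW
  calc ‖fderiv ℝ W x (EuclideanSpace.single i 1)‖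
      ≤ ‖fderiv ℝ W x‖ * ‖EuclideanSpace.single i (1:ℝ)‖ := (fderiv ℝ W x).le_opNorm _
    _ ≤ K := by rw [EuclideanSpace.norm_single, norm_one, mul_one]; exact h1

lemma lipschitz_norm_le {W : En n → En n} {K : NNReal} (hW : LipschitzWith K W) {r : ℝ}
    (x : En n) (hx : ‖x‖ ≤ r) : ‖W x‖ ≤ ‖W 0‖ + K * r := by
  have h := hW.dist_le_mul x 0
  rw [dist_eq_norm, dist_eq_norm, sub_zero] at h
  have h2 : ‖W x - W 0‖ ≤ K * r := h.trans (by nlinarith [NNReal.coe_nonneg K])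
  calc ‖W x‖ = ‖W 0 + (W x - W 0)‖ := by rw [add_sub_cancel]
    _ ≤ ‖W 0‖ + ‖W x - W 0‖ := norm_add_le _ _
    _ ≤ ‖W 0‖ + K * r := by linarith

lemma lipschitz_fderiv_of_grad {f : En n → ℝ} {K : NNReal}
    (hK : LipschitzWith K (gradient f)) : LipschitzWith K (fun y => fderiv ℝ f y) := by
  have key : ∀ y, fderiv ℝ f y = InnerProductSpace.toDual ℝ (En n) (gradient f y) := fun y =>
    ((InnerProductSpace.toDual ℝ (En n)).apply_symm_apply (fderiv ℝ f y)).symm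
  refine LipschitzWith.of_dist_le_mul fun x y => ?_
  rw [dist_eq_norm, key x, key y, ← map_sub, (InnerProductSpace.toDual ℝ (En n)).norm_map,
    ← dist_eq_norm]
  exact hK.dist_le_mul x y

lemma integrableOn_of_bdd {g : En n → ℝ} {Ω : Set (En n)} (hΩm : MeasurableSet Ω)
    (hfin : volume Ω < ⊤) (hmeas : AEStronglyMeasurable g (volume.restrict Ω))
    {C : ℝ} (hC : ∀ x ∈ Ω, |g x| ≤ C) : IntegrableOn g Ω := by
  haveI : IsFiniteMeasure (volume.restrict Ω) :=
    ⟨by rwa [Measure.restrict_apply_univ]⟩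
  refine ⟨hmeas, HasFiniteIntegral.of_bounded (C := C) ?_⟩
  filter_upwards [ae_restrict_mem hΩm] with x hx
  simpa [Real.norm_eq_abs] using hC x hx

lemma chi_lipschitz (R : ℝ) :
    LipschitzWith 1 (fun x : En n => max 0 (min 1 (R + 2 - ‖x‖))) := by
  refine LipschitzWith.of_dist_le_mul fun x y => ?_
  rw [Real.dist_eq, NNReal.coe_one, one_mul]
  have h1 : |max 0 (min 1 (R + 2 - ‖x‖)) - max 0 (min 1 (R + 2 - ‖y‖))|
      ≤ |min 1 (R + 2 - ‖x‖) - min 1 (R + 2 - ‖y‖)| := by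
    rw [max_comm 0 (min 1 (R + 2 - ‖x‖)), max_comm 0 (min 1 (R + 2 - ‖y‖))]
    exact abs_max_sub_max_le_abs _ _ _
  have h2 : |min 1 (R + 2 - ‖x‖) - min 1 (R + 2 - ‖y‖)|
      ≤ max |(1:ℝ) - 1| |(R + 2 - ‖x‖) - (R + 2 - ‖y‖)| := abs_min_sub_min_le_max _ _ _ _
  have h3 : |(R + 2 - ‖x‖) - (R + 2 - ‖y‖)| = |‖y‖ - ‖x‖| := by ring_nf
  have h4 : |‖y‖ - ‖x‖| ≤ ‖y - x‖ := abs_norm_sub_norm_le y x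
  have h5 : ‖y - x‖ = dist x y := by rw [dist_comm, dist_eq_norm]
  refine h1.trans (h2.trans ?_)
  rw [h3]
  simp only [sub_self, abs_zero]
  rw [max_eq_right (abs_nonneg _)]
  rw [← h5]; exact h4

lemma lap_abs_le {f : En n → ℝ} {K : NNReal} (hK : LipschitzWith K (gradient f)) (x : En n) :
    |lap f x| ≤ n * K := by
  rw [lap_eq_divg]
  unfold divg
  calc |∑ i, fderiv ℝ (fun y => gradient f y i) x (EuclideanSpace.single i 1)|
      ≤ ∑ i, |fderiv ℝ (fun y => gradient f y i) x (EuclideanSpace.single i 1)| :=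
        Finset.abs_sum_le_sum_abs _ _
    _ ≤ ∑ _i : Fin n, (K:ℝ) := Finset.sum_le_sum fun i _ =>
        fderiv_apply_single_le (lipschitz_coord hK i) x i
    _ = n * K := by simp [mul_comm]

lemma divg_abs_le {Z : En n → En n} {K : NNReal} (hK : LipschitzWith K Z) (x : En n) :
    |divg Z x| ≤ n * K := by
  unfold divg
  calc |∑ i, fderiv ℝ (fun y => Z y i) x (EuclideanSpace.single i 1)|
      ≤ ∑ i, |fderiv ℝ (fun y => Z y i) x (EuclideanSpace.single i 1)| :=
        Finset.abs_sum_le_sum_abs _ _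
    _ ≤ ∑ _i : Fin n, (K:ℝ) := Finset.sum_le_sum fun i _ =>
        fderiv_apply_single_le (lipschitz_coord hK i) x i
    _ = n * K := by simp [mul_comm]

set_option maxHeartbeats 2000000 in
lemma rellich_main (n : ℕ) (Ω : Set (En n)) (hΩ : IsOpen Ω)
    (hbd : Bornology.IsBounded Ω) (σb : Measure (En n)) (ν : En n → En n)
    (hdiv : ∀ F : En n → En n, (∃ K : NNReal, LipschitzWith K F) →
      (∫ x in Ω, divg F x) = ∫ x in frontier Ω, ⟪F x, ν x⟫ ∂σb)
    (Z : En n → En n) (f : En n → ℝ)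
    (hZL : ∃ K : NNReal, LipschitzWith K Z)
    (hf : ContDiff ℝ 1 f) (hWL : ∃ K : NNReal, LipschitzWith K (gradient f)) :
    2 * (∫ x in frontier Ω, ⟪Z x, gradient f x⟫ * ⟪gradient f x, ν x⟫ ∂σb)
        - ∫ x in frontier Ω, ‖gradient f x‖ ^ 2 * ⟪Z x, ν x⟫ ∂σb =
      2 * (∫ x in Ω, ⟪Z x, gradient f x⟫ * lap f x)
        - (∫ x in Ω, divg Z x * ‖gradient f x‖ ^ 2)
        + 2 * ∑ j, ∫ x in Ω,
            (∑ k, fderiv ℝ (fun y => Z y k) x (EuclideanSpace.single j 1) *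
              pder k f x) * pder j f x := by
  obtain ⟨KZ, hKZ⟩ := hZL
  obtain ⟨KW, hKW⟩ := hWL
  have hΩm : MeasurableSet Ω := hΩ.measurableSet
  have hfin : volume Ω < ⊤ := hbd.measure_lt_top
  obtain ⟨R₀, hR₀⟩ := hbd.subset_closedBall 0
  set R : ℝ := max R₀ 0 with hRdef
  have hR0 : 0 ≤ R := le_max_right _ _
  have hRsub : Ω ⊆ closedBall 0 R :=
    hR₀.trans (closedBall_subset_closedBall (le_max_left _ _))
  have hclos : closure Ω ⊆ closedBall 0 R := closure_minimal hRsub isClosed_closedBall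
  -- cutoff
  set χ : En n → ℝ := fun x => max 0 (min 1 (R + 2 - ‖x‖)) with hχdef
  have hχL : LipschitzWith 1 χ := chi_lipschitz R
  have hχ01 : ∀ x, |χ x| ≤ 1 := by
    intro x
    rw [abs_le]
    constructor
    · exact le_trans (by norm_num) (le_max_left _ _)
    · exact max_le (by norm_num) (min_le_left _ _)
  have hχ1 : ∀ x : En n, ‖x‖ ≤ R + 1 → χ x = 1 := by
    intro x hx
    have : min 1 (R + 2 - ‖x‖) = 1 := min_eq_left (by linarith)
    rw [hχdef]; simp only [this]; exact max_eq_right (by norm_num)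
  have hχ0 : ∀ x : En n, R + 2 ≤ ‖x‖ → χ x = 0 := by
    intro x hx
    have : min 1 (R + 2 - ‖x‖) = R + 2 - ‖x‖ := min_eq_right (by linarith)
    rw [hχdef]; simp only [this]; exact max_eq_left (by linarith)
  -- truncated fields
  set Zc : En n → En n := fun x => χ x • Z x with hZcdef
  set Wc : En n → En n := fun x => χ x • gradient f x with hWcdef
  obtain ⟨KZc, hKZc⟩ := lipschitz_smul_cutoff hχL hKZ hχ01 (by linarith : (0:ℝ) ≤ R + 2) hχ0
  obtain ⟨KWc, hKWc⟩ := lipschitz_smul_cutoff hχL hKW hχ01 (by linarith : (0:ℝ) ≤ R + 2) hχ0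
  set CZ : ℝ := ‖Z 0‖ + KZ * (R + 2) with hCZdef
  set CW : ℝ := ‖gradient f 0‖ + KW * (R + 2) with hCWdef
  have hCZ0 : 0 ≤ CZ := by positivity
  have hCW0 : 0 ≤ CW := by positivity
  have hZcB : ∀ x, ‖Zc x‖ ≤ CZ := by
    intro x
    by_cases h : ‖x‖ ≤ R + 2
    · calc ‖Zc x‖ = |χ x| * ‖Z x‖ := by rw [hZcdef]; simp [norm_smul]
        _ ≤ 1 * CZ := mul_le_mul (hχ01 x) (lipschitz_norm_le hKZ x h) (norm_nonneg _)
            zero_le_one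
        _ = CZ := one_mul _
    · have : χ x = 0 := hχ0 x (le_of_not_ge h)
      simp [hZcdef, this, hCZ0]
  have hWcB : ∀ x, ‖Wc x‖ ≤ CW := by
    intro x
    by_cases h : ‖x‖ ≤ R + 2
    · calc ‖Wc x‖ = |χ x| * ‖gradient f x‖ := by rw [hWcdef]; simp [norm_smul]
        _ ≤ 1 * CW := mul_le_mul (hχ01 x) (lipschitz_norm_le hKW x h) (norm_nonneg _)
            zero_le_one
        _ = CW := one_mul _
    · have : χ x = 0 := hχ0 x (le_of_not_ge h)
      simp [hWcdef, this, hCW0]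
  -- the two lipschitz fields
  obtain ⟨Ki1, hKi1⟩ := lipschitz_inner_bdd hKZc hKWc hZcB hWcB
  obtain ⟨Ki2, hKi2⟩ := lipschitz_inner_bdd hKWc hKWc hWcB hWcB
  have hib1 : ∀ x, |(⟪Zc x, Wc x⟫:ℝ)| ≤ CZ * CW := fun x =>
    (abs_real_inner_le_norm _ _).trans
      (mul_le_mul (hZcB x) (hWcB x) (norm_nonneg _) hCZ0)
  have hib2 : ∀ x, |(⟪Wc x, Wc x⟫:ℝ)| ≤ CW * CW := fun x =>
    (abs_real_inner_le_norm _ _).trans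
      (mul_le_mul (hWcB x) (hWcB x) (norm_nonneg _) hCW0)
  obtain ⟨K1, hK1⟩ := lipschitz_smul_bdd hKi1 hKWc hib1 hWcB
  obtain ⟨K2, hK2⟩ := lipschitz_smul_bdd hKi2 hKZc hib2 hZcB
  set F₁ : En n → En n := fun x => (⟪Zc x, Wc x⟫:ℝ) • Wc x with hF₁def
  set F₂ : En n → En n := fun x => (⟪Wc x, Wc x⟫:ℝ) • Zc x with hF₂def
  have hdiv1 := hdiv F₁ ⟨K1, hK1⟩
  have hdiv2 := hdiv F₂ ⟨K2, hK2⟩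
  -- boundary congruence
  have hfrR : ∀ x ∈ frontier Ω, ‖x‖ ≤ R + 1 := by
    intro x hx
    have h1 : x ∈ closedBall (0 : En n) R := hclos (frontier_subset_closure hx)
    rw [mem_closedBall_zero_iff] at h1
    linarith
  have hbd1 : ∫ x in frontier Ω, ⟪F₁ x, ν x⟫ ∂σb
      = ∫ x in frontier Ω, ⟪Z x, gradient f x⟫ * ⟪gradient f x, ν x⟫ ∂σb := by
    refine setIntegral_congr_fun isClosed_frontier.measurableSet fun x hx => ?_
    have h1 : χ x = 1 := hχ1 x (hfrR x hx)
    show (⟪(⟪Zc x, Wc x⟫:ℝ) • Wc x, ν x⟫:ℝ) = _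
    rw [real_inner_smul_left]
    rw [hZcdef, hWcdef]
    simp only [h1, one_smul]
  have hbd2 : ∫ x in frontier Ω, ⟪F₂ x, ν x⟫ ∂σb
      = ∫ x in frontier Ω, ‖gradient f x‖ ^ 2 * ⟪Z x, ν x⟫ ∂σb := by
    refine setIntegral_congr_fun isClosed_frontier.measurableSet fun x hx => ?_
    have h1 : χ x = 1 := hχ1 x (hfrR x hx)
    show (⟪(⟪Wc x, Wc x⟫:ℝ) • Zc x, ν x⟫:ℝ) = _
    rw [real_inner_smul_left]
    rw [hWcdef, hZcdef]
    simp only [h1, one_smul]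
    rw [real_inner_self_eq_norm_sq]
  -- interior congruence
  have hsubball : Ω ⊆ ball 0 (R + 1) := fun x hx => by
    rw [mem_ball_zero_iff]
    have := mem_closedBall_zero_iff.mp (hRsub hx)
    linarith
  have hFG1 : ∀ x ∈ Ω, divg F₁ x
      = divg (fun y => (⟪Z y, gradient f y⟫:ℝ) • gradient f y) x := by
    intro x hx
    apply divg_congr_nhds
    filter_upwards [isOpen_ball.mem_nhds (hsubball hx)] with y hy
    have h1 : χ y = 1 := hχ1 y (le_of_lt (mem_ball_zero_iff.mp hy))
    show (⟪Zc y, Wc y⟫:ℝ) • Wc y = _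
    rw [hZcdef, hWcdef]
    simp only [h1, one_smul]
  have hFG2 : ∀ x ∈ Ω, divg F₂ x
      = divg (fun y => (⟪gradient f y, gradient f y⟫:ℝ) • Z y) x := by
    intro x hx
    apply divg_congr_nhds
    filter_upwards [isOpen_ball.mem_nhds (hsubball hx)] with y hy
    have h1 : χ y = 1 := hχ1 y (le_of_lt (mem_ball_zero_iff.mp hy))
    show (⟪Wc y, Wc y⟫:ℝ) • Zc y = _
    rw [hZcdef, hWcdef]
    simp only [h1, one_smul]
  -- integrand functions
  set P : En n → ℝ := fun x => (⟪Z x, gradient f x⟫:ℝ) * lap f x with hPdef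
  set Q : En n → ℝ := fun x => divg Z x * ‖gradient f x‖ ^ 2 with hQdef
  set S : En n → ℝ := fun x =>
    ∑ i, (⟪Z x, fderiv ℝ (gradient f) x (EuclideanSpace.single i 1)⟫:ℝ) * gradient f x i
    with hSdef
  set Cc : Fin n → En n → ℝ := fun j x =>
    (∑ k, fderiv ℝ (fun y => Z y k) x (EuclideanSpace.single j 1) * pder k f x) * pder j f x
    with hCcdef
  -- a.e. identities
  have hgZ : ∀ᵐ x : En n, DifferentiableAt ℝ Z x := hKZ.ae_differentiableAt
  have hgW : ∀ᵐ x : En n, DifferentiableAt ℝ (gradient f) x := hKW.ae_differentiableAt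
  have hgF : ∀ᵐ x : En n, DifferentiableAt ℝ (fun y => fderiv ℝ f y) x :=
    (lipschitz_fderiv_of_grad hKW).ae_differentiableAt
  have hae1 : ∀ᵐ x : En n, x ∈ Ω → divg F₁ x = P x + S x + ∑ j, Cc j x := by
    filter_upwards [hgZ, hgW] with x h1 h2 hx
    rw [hFG1 x hx]
    exact pointA Z f x h1 h2
  have hae2 : ∀ᵐ x : En n, x ∈ Ω → divg F₂ x = 2 * S x + Q x := by
    filter_upwards [hgZ, hgW, hgF] with x h1 h2 h3 hx
    rw [hFG2 x hx]
    exact pointB Z f x hf h1 h2 h3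
  have hint1 : ∫ x in Ω, divg F₁ x = ∫ x in Ω, (P x + S x + ∑ j, Cc j x) :=
    setIntegral_congr_ae hΩm hae1
  have hint2 : ∫ x in Ω, divg F₂ x = ∫ x in Ω, (2 * S x + Q x) :=
    setIntegral_congr_ae hΩm hae2
  -- bounds on Ω
  set CZ0 : ℝ := ‖Z 0‖ + KZ * R with hCZ0def
  set CW0 : ℝ := ‖gradient f 0‖ + KW * R with hCW0def
  have hCZ0n : 0 ≤ CZ0 := by positivity
  have hCW0n : 0 ≤ CW0 := by positivity
  have hxR : ∀ x ∈ Ω, ‖x‖ ≤ R := fun x hx => mem_closedBall_zero_iff.mp (hRsub hx)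
  have hZ0 : ∀ x ∈ Ω, ‖Z x‖ ≤ CZ0 := fun x hx => lipschitz_norm_le hKZ x (hxR x hx)
  have hW0 : ∀ x ∈ Ω, ‖gradient f x‖ ≤ CW0 := fun x hx => lipschitz_norm_le hKW x (hxR x hx)
  have hpder : ∀ (k : Fin n), ∀ x ∈ Ω, |pder k f x| ≤ CW0 := by
    intro k x hx
    rw [← grad_apply]
    exact (coord_abs_le _ k).trans (hW0 x hx)
  -- continuity and measurability facts
  have hZcont : Continuous Z := hKZ.continuous
  have hWcont : Continuous (gradient f) := hKW.continuous
  have hlap_meas : Measurable (lap f) := by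
    apply Finset.measurable_sum
    intro i _
    exact measurable_fderiv_apply_const ℝ _ _
  have hdivZ_meas : Measurable (divg Z) := by
    apply Finset.measurable_sum
    intro i _
    exact measurable_fderiv_apply_const ℝ _ _
  have hpder_cont : ∀ k : Fin n, Continuous (fun x => pder k f x) := by
    intro k
    rw [pder_eq_grad]
    exact (EuclideanSpace.proj (𝕜 := ℝ) k).continuous.comp hWcont
  have hgradi_cont : ∀ i : Fin n, Continuous (fun x => gradient f x i) := fun i =>
    (EuclideanSpace.proj (𝕜 := ℝ) i).continuous.comp hWcont
  -- integrability
  have hIntP : IntegrableOn P Ω := by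
    refine integrableOn_of_bdd hΩm hfin
      (((hZcont.inner hWcont).measurable.mul hlap_meas).aestronglyMeasurable)
      (C := CZ0 * CW0 * (n * KW)) ?_
    intro x hx
    rw [hPdef]
    have h1 : |(⟪Z x, gradient f x⟫:ℝ)| ≤ CZ0 * CW0 := (abs_real_inner_le_norm _ _).trans
      (mul_le_mul (hZ0 x hx) (hW0 x hx) (norm_nonneg _) hCZ0n)
    have h2 : |lap f x| ≤ n * KW := lap_abs_le hKW x
    calc |(⟪Z x, gradient f x⟫:ℝ) * lap f x|
        = |(⟪Z x, gradient f x⟫:ℝ)| * |lap f x| := abs_mul _ _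
      _ ≤ (CZ0 * CW0) * (n * KW) := mul_le_mul h1 h2 (abs_nonneg _) (by positivity)
  have hIntQ : IntegrableOn Q Ω := by
    refine integrableOn_of_bdd hΩm hfin
      ((hdivZ_meas.mul ((hWcont.norm.pow 2).measurable)).aestronglyMeasurable)
      (C := n * KZ * (CW0 * CW0)) ?_
    intro x hx
    rw [hQdef]
    have h1 : |divg Z x| ≤ n * KZ := divg_abs_le hKZ x
    have h2 : |‖gradient f x‖ ^ 2| ≤ CW0 * CW0 := by
      rw [abs_of_nonneg (by positivity), pow_two]
      exact mul_le_mul (hW0 x hx) (hW0 x hx) (norm_nonneg _) hCW0n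
    calc |divg Z x * ‖gradient f x‖ ^ 2| = |divg Z x| * |‖gradient f x‖ ^ 2| := abs_mul _ _
      _ ≤ (n * KZ) * (CW0 * CW0) := mul_le_mul h1 h2 (abs_nonneg _) (by positivity)
  have hIntS : IntegrableOn S Ω := by
    refine integrableOn_of_bdd hΩm hfin ?_ (C := n * (CZ0 * KW * CW0)) ?_
    · refine (Finset.measurable_sum _ fun i _ => ?_).aestronglyMeasurable
      exact (hZcont.measurable.inner
        (measurable_fderiv_apply_const ℝ (gradient f) _)).mul (hgradi_cont i).measurable
    · intro x hx
      rw [hSdef]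
      have hterm : ∀ i : Fin n,
          |(⟪Z x, fderiv ℝ (gradient f) x (EuclideanSpace.single i 1)⟫:ℝ) * gradient f x i|
          ≤ CZ0 * KW * CW0 := by
        intro i
        have h1 : |(⟪Z x, fderiv ℝ (gradient f) x (EuclideanSpace.single i 1)⟫:ℝ)|
            ≤ CZ0 * KW := (abs_real_inner_le_norm _ _).trans
          (mul_le_mul (hZ0 x hx) (fderiv_vec_apply_single_le hKW x i) (norm_nonneg _) hCZ0n)
        have h2 : |gradient f x i| ≤ CW0 := (coord_abs_le _ i).trans (hW0 x hx)
        calc |(⟪Z x, fderiv ℝ (gradient f) x (EuclideanSpace.single i 1)⟫:ℝ) * gradient f x i|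
            = _ * _ := abs_mul _ _
          _ ≤ (CZ0 * KW) * CW0 := mul_le_mul h1 h2 (abs_nonneg _) (by positivity)
      calc |∑ i, (⟪Z x, fderiv ℝ (gradient f) x (EuclideanSpace.single i 1)⟫:ℝ)
            * gradient f x i|
          ≤ ∑ i, |(⟪Z x, fderiv ℝ (gradient f) x (EuclideanSpace.single i 1)⟫:ℝ)
            * gradient f x i| := Finset.abs_sum_le_sum_abs _ _
        _ ≤ ∑ _i : Fin n, (CZ0 * KW * CW0) := Finset.sum_le_sum fun i _ => hterm i
        _ = n * (CZ0 * KW * CW0) := by simp [mul_comm]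
  have hIntC : ∀ j : Fin n, IntegrableOn (Cc j) Ω := by
    intro j
    refine integrableOn_of_bdd hΩm hfin ?_ (C := n * KZ * CW0 * CW0) ?_
    · refine ((Finset.measurable_sum _ fun k _ => ?_).mul
        (hpder_cont j).measurable).aestronglyMeasurable
      exact (measurable_fderiv_apply_const ℝ (fun y => Z y k) _).mul
        (hpder_cont k).measurable
    · intro x hx
      rw [hCcdef]
      have h1 : |∑ k, fderiv ℝ (fun y => Z y k) x (EuclideanSpace.single j 1) * pder k f x|
          ≤ n * KZ * CW0 := by
        calc |∑ k, fderiv ℝ (fun y => Z y k) x (EuclideanSpace.single j 1) * pder k f x|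
            ≤ ∑ k, |fderiv ℝ (fun y => Z y k) x (EuclideanSpace.single j 1) * pder k f x| :=
              Finset.abs_sum_le_sum_abs _ _
          _ ≤ ∑ _k : Fin n, (KZ * CW0) := by
              refine Finset.sum_le_sum fun k _ => ?_
              rw [abs_mul]
              exact mul_le_mul (fderiv_apply_single_le (lipschitz_coord hKZ k) x j)
                (hpder k x hx) (abs_nonneg _) (NNReal.coe_nonneg KZ)
          _ = n * KZ * CW0 := by simp; ring
      calc |(∑ k, fderiv ℝ (fun y => Z y k) x (EuclideanSpace.single j 1) * pder k f x)
            * pder j f x| = _ * _ := abs_mul _ _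
        _ ≤ (n * KZ * CW0) * CW0 := mul_le_mul h1 (hpder j x hx) (abs_nonneg _) (by positivity)
  -- split integrals
  have hIntCsum : IntegrableOn (fun x => ∑ j, Cc j x) Ω :=
    integrable_finset_sum _ fun j _ => hIntC j
  have hsplit1 : ∫ x in Ω, (P x + S x + ∑ j, Cc j x)
      = (∫ x in Ω, P x) + (∫ x in Ω, S x) + ∑ j, ∫ x in Ω, Cc j x := by
    have hPS : IntegrableOn (fun x => P x + S x) Ω := hIntP.add hIntS
    rw [integral_add hPS hIntCsum, integral_add hIntP hIntS,
      integral_finset_sum _ fun j _ => hIntC j]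
  have hsplit2 : ∫ x in Ω, (2 * S x + Q x) = 2 * (∫ x in Ω, S x) + ∫ x in Ω, Q x := by
    have hS2 : IntegrableOn (fun x => 2 * S x) Ω := hIntS.const_mul 2
    rw [integral_add hS2 hIntQ, integral_const_mul]
  -- final assembly
  rw [← hbd1, ← hbd2, ← hdiv1, ← hdiv2, hint1, hint2, hsplit1, hsplit2]
  ring

lemma divg_id (x : En n) : divg (fun y : En n => y) x = n := by
  unfold divg
  have h : ∀ i : Fin n, fderiv ℝ (fun y : En n => y i) x (EuclideanSpace.single i 1)
      = 1 := by
    intro i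
    have hd : DifferentiableAt ℝ (fun y : En n => y) x := differentiableAt_fun_id
    have := fderiv_coord (W := fun y : En n => y) hd i (EuclideanSpace.single i 1)
    rw [this, fderiv_id']
    simp [EuclideanSpace.single_apply]
  simp only [h]
  simp

lemma comm_id (f : En n → ℝ) (x : En n) (j : Fin n) :
    (∑ k, fderiv ℝ (fun y : En n => y k) x (EuclideanSpace.single j 1) * pder k f x)
      = pder j f x := by
  have h : ∀ k : Fin n, fderiv ℝ (fun y : En n => y k) x (EuclideanSpace.single j 1)
      = EuclideanSpace.single j (1:ℝ) k := by
    intro k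
    have hd : DifferentiableAt ℝ (fun y : En n => y) x := differentiableAt_fun_id
    have := fderiv_coord (W := fun y : En n => y) hd k (EuclideanSpace.single j 1)
    rw [this, fderiv_id']
    rfl
  simp only [h, EuclideanSpace.single_apply]
  rw [Finset.sum_congr rfl fun k _ => by rw [ite_mul, one_mul, zero_mul]]
  rw [Finset.sum_ite_eq' Finset.univ j (fun k => pder k f x)]
  simp

lemma sum_pder_sq (f : En n → ℝ) (x : En n) :
    ∑ j, pder j f x * pder j f x = ‖gradient f x‖ ^ 2 := by
  rw [← real_inner_self_eq_norm_sq, coord_inner]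
  exact Finset.sum_congr rfl fun k _ => by rw [grad_apply]

set_option maxHeartbeats 1000000 in
lemma rellich_part2 (n : ℕ) (Ω : Set (En n)) (hΩ : IsOpen Ω)
    (hbd : Bornology.IsBounded Ω) (σb : Measure (En n)) (ν : En n → En n)
    (hdiv : ∀ F : En n → En n, (∃ K : NNReal, LipschitzWith K F) →
      (∫ x in Ω, divg F x) = ∫ x in frontier Ω, ⟪F x, ν x⟫ ∂σb)
    (f : En n → ℝ) (hf : ContDiff ℝ 1 f)
    (hWL : ∃ K : NNReal, LipschitzWith K (gradient f)) (hsupp : tsupport f ⊆ Ω) :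
    ∫ x in Ω, ⟪x, gradient f x⟫ * lap f x =
      ((n : ℝ) / 2 - 1) * ∫ x in Ω, ‖gradient f x‖ ^ 2 := by
  obtain ⟨KW, hKW⟩ := hWL
  have hΩm : MeasurableSet Ω := hΩ.measurableSet
  have hfin : volume Ω < ⊤ := hbd.measure_lt_top
  have h := rellich_main n Ω hΩ hbd σb ν hdiv (fun x => x) f ⟨1, fun x y => by simpa using LipschitzWith.id x y⟩ hf
    ⟨KW, hKW⟩
  -- gradient vanishes on the frontier
  have hgrad0 : ∀ x ∈ frontier Ω, gradient f x = 0 := by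
    intro x hx
    have hxnΩ : x ∉ Ω := by
      rw [hΩ.frontier_eq] at hx
      exact hx.2
    have hxnsupp : x ∉ tsupport f := fun hmem => hxnΩ (hsupp hmem)
    have hev : f =ᶠ[nhds x] (fun _ => (0:ℝ)) := by
      filter_upwards [(isClosed_tsupport f).isOpen_compl.mem_nhds hxnsupp] with y hy
      exact image_eq_zero_of_notMem_tsupport hy
    have hfd : fderiv ℝ f x = 0 := by
      rw [hev.fderiv_eq, fderiv_fun_const]
      rfl
    show (InnerProductSpace.toDual ℝ (En n)).symm (fderiv ℝ f x) = 0
    rw [hfd, map_zero]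
  have hb1 : ∫ x in frontier Ω, ⟪x, gradient f x⟫ * ⟪gradient f x, ν x⟫ ∂σb = 0 := by
    rw [setIntegral_congr_fun isClosed_frontier.measurableSet
      (g := fun _ => (0:ℝ)) fun x hx => by simp [hgrad0 x hx]]
    simp
  have hb2 : ∫ x in frontier Ω, ‖gradient f x‖ ^ 2 * ⟪x, ν x⟫ ∂σb = 0 := by
    rw [setIntegral_congr_fun isClosed_frontier.measurableSet
      (g := fun _ => (0:ℝ)) fun x hx => by simp [hgrad0 x hx]]
    simp
  rw [hb1, hb2] at h
  -- divergence of identity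
  have he2 : ∫ x in Ω, divg (fun y : En n => y) x * ‖gradient f x‖ ^ 2
      = (n:ℝ) * ∫ x in Ω, ‖gradient f x‖ ^ 2 := by
    simp_rw [divg_id]
    rw [integral_const_mul]
  -- commutator terms
  have hcomm : ∀ j : Fin n, (fun x => (∑ k, fderiv ℝ (fun y : En n => y k) x
      (EuclideanSpace.single j 1) * pder k f x) * pder j f x)
      = fun x => pder j f x * pder j f x := by
    intro j; funext x; rw [comm_id]
  -- integrability of pder squares
  obtain ⟨R₀, hR₀⟩ := hbd.subset_closedBall 0
  set R : ℝ := max R₀ 0 with hRdef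
  have hRsub : Ω ⊆ closedBall 0 R :=
    hR₀.trans (closedBall_subset_closedBall (le_max_left _ _))
  set CW0 : ℝ := ‖gradient f 0‖ + KW * R with hCW0def
  have hCW0n : 0 ≤ CW0 := by positivity
  have hpder : ∀ (k : Fin n), ∀ x ∈ Ω, |pder k f x| ≤ CW0 := by
    intro k x hx
    rw [← grad_apply]
    exact (coord_abs_le _ k).trans
      (lipschitz_norm_le hKW x (mem_closedBall_zero_iff.mp (hRsub hx)))
  have hpder_cont : ∀ k : Fin n, Continuous (fun x => pder k f x) := by
    intro k
    rw [pder_eq_grad]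
    exact (EuclideanSpace.proj (𝕜 := ℝ) k).continuous.comp hKW.continuous
  have hIntj : ∀ j : Fin n, IntegrableOn (fun x => pder j f x * pder j f x) Ω := by
    intro j
    refine integrableOn_of_bdd hΩm hfin
      (((hpder_cont j).mul (hpder_cont j)).measurable.aestronglyMeasurable)
      (C := CW0 * CW0) ?_
    intro x hx
    rw [abs_mul]
    exact mul_le_mul (hpder j x hx) (hpder j x hx) (abs_nonneg _) hCW0n
  have he3 : ∑ j, ∫ x in Ω, (∑ k, fderiv ℝ (fun y : En n => y k) x
      (EuclideanSpace.single j 1) * pder k f x) * pder j f x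
      = ∫ x in Ω, ‖gradient f x‖ ^ 2 := by
    rw [Finset.sum_congr rfl fun j _ => by rw [hcomm j]]
    rw [← integral_finset_sum _ fun j _ => hIntj j]
    refine setIntegral_congr_fun hΩm fun x _ => ?_
    exact sum_pder_sq f x
  rw [he2, he3] at h
  linarith

/-- Rellich identity, Proposition `P:rellich` of the paper.
`Ω ⊂ ℝⁿ` is a bounded open set equipped with a boundary (surface) measure `σb` and
an outward unit normal `ν` for which the divergence theorem holds for Lipschitz
vector fields (the hypothesis `hdiv` — this encodes that `Ω` is piecewise `C¹`).
For a Lipschitz vector field `Z` and `f ∈ C^{1,1}(Ω̄)` (`f` is `C¹` with Lipschitz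
gradient) one has the Rellich identity; in particular, for `Z(x) = x` and
`f ∈ C^{1,1}_0(Ω̄)`, `∫_Ω ⟨x,∇f⟩Δf = (n/2 − 1)∫_Ω |∇f|²`. -/
theorem rellich_identity (n : ℕ) (Ω : Set (En n)) (hΩ : IsOpen Ω)
    (hbd : Bornology.IsBounded Ω) (σb : Measure (En n)) (ν : En n → En n)
    (hdiv : ∀ F : En n → En n, (∃ K : NNReal, LipschitzWith K F) →
      (∫ x in Ω, divg F x) = ∫ x in frontier Ω, ⟪F x, ν x⟫ ∂σb) :
    (∀ (Z : En n → En n) (f : En n → ℝ),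
      (∃ K : NNReal, LipschitzWith K Z) →
      ContDiff ℝ 1 f → (∃ K : NNReal, LipschitzWith K (gradient f)) →
      2 * (∫ x in frontier Ω, ⟪Z x, gradient f x⟫ * ⟪gradient f x, ν x⟫ ∂σb)
          - ∫ x in frontier Ω, ‖gradient f x‖ ^ 2 * ⟪Z x, ν x⟫ ∂σb =
        2 * (∫ x in Ω, ⟪Z x, gradient f x⟫ * lap f x)
          - (∫ x in Ω, divg Z x * ‖gradient f x‖ ^ 2)
          + 2 * ∑ j, ∫ x in Ω,
              (∑ k, fderiv ℝ (fun y => Z y k) x (EuclideanSpace.single j 1) *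
                pder k f x) * pder j f x) ∧
    (∀ f : En n → ℝ,
      ContDiff ℝ 1 f → (∃ K : NNReal, LipschitzWith K (gradient f)) →
      tsupport f ⊆ Ω →
      ∫ x in Ω, ⟪x, gradient f x⟫ * lap f x =
        ((n : ℝ) / 2 - 1) * ∫ x in Ω, ‖gradient f x‖ ^ 2) := by
  exact ⟨fun Z f hZL hf hWL => rellich_main n Ω hΩ hbd σb ν hdiv Z f hZL hf hWL,
    fun f hf hWL hsupp => rellich_part2 n Ω hΩ hbd σb ν hdiv f hf hWL hsupp⟩
end
end
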